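/- arXiv:1803.00324 — 9 statements merged into one kernel-verified Lean document; each statement's English description precedes it below -/
import Mathlib

section
/- Let w = mq be an abundant number, where m is deficient, q is prime, q does not divide m, and q ≥ σ(p^α) − 1 for every prime power p^α exactly dividing m (i.e., p^α ∣ m and p^(α+1) ∤ m). Then w is a primitive abundant number, i.e., w is abundant and every proper divisor of w is deficient. -/
/-- `sigma' n` is the sum of all divisors of `n` (including `n`). -/
def sigma' (n : ℕ) : ℕ := ∑ d ∈ n.divisors, d

/-- A natural number is abundant if `σ(n) > 2n`. -/
def Abundant (n : ℕ) : Prop := 2 * n < sigma' n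

/-- A natural number is deficient if `σ(n) < 2n`. -/
def Deficient (n : ℕ) : Prop := sigma' n < 2 * n

/-- A natural number is semiperfect if it is the sum of some set of
its distinct proper divisors. -/
def Semiperfect (n : ℕ) : Prop := ∃ S ⊆ n.properDivisors, ∑ d ∈ S, d = n

/-- A natural number is weird if it is abundant but not semiperfect. -/
def Weird (n : ℕ) : Prop := Abundant n ∧ ¬ Semiperfect n

/-! Work with the abundancy index `σ(n)/n`, which is multiplicative on coprime factors and
monotone under divisibility, so divisors of deficient numbers are deficient. A proper divisor
of `mq` prime to `q` divides `m`. Any other one is `q d'` with `d' ∣ m / p` for some prime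
`p ∣ m`; if `p^α ∥ m`, then passing from `m` to `q (m / p)` multiplies the index by
`(1 + 1/q) / (1 + 1/(σ(p^α) - 1)) ≤ 1`, so `q (m / p)` and its divisor `q d'` are deficient. -/

lemma abundancyIndex_eq_sigma'_div (n : ℕ) : n.abundancyIndex = sigma' n / n := by
  rw [Nat.abundancyIndex, sigma', Nat.cast_sum]

lemma abundancyIndex_nonneg (n : ℕ) : 0 ≤ n.abundancyIndex := by
  rw [abundancyIndex_eq_sigma'_div]
  positivity

lemma Deficient.ne_zero {n : ℕ} (h : Deficient n) : n ≠ 0 := by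
  rintro rfl
  simp [Deficient, sigma'] at h

lemma deficient_iff_abundancyIndex_lt_two {n : ℕ} (hn : n ≠ 0) :
    Deficient n ↔ n.abundancyIndex < 2 := by
  rw [Deficient, abundancyIndex_eq_sigma'_div, div_lt_iff₀ (by positivity)]
  norm_cast

lemma Deficient.of_dvd {d n : ℕ} (h : Deficient n) (hd : d ∣ n) : Deficient d := by
  have hd0 : d ≠ 0 := ne_zero_of_dvd_ne_zero h.ne_zero hd
  rw [deficient_iff_abundancyIndex_lt_two hd0]
  exact (Nat.abundancyIndex_le_of_dvd h.ne_zero hd).trans_lt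
    ((deficient_iff_abundancyIndex_lt_two h.ne_zero).mp h)

lemma abundancyIndex_mul {a b : ℕ} (h : a.Coprime b) :
    (a * b).abundancyIndex = a.abundancyIndex * b.abundancyIndex := by
  simp only [abundancyIndex_eq_sigma'_div, sigma', h.sum_divisors_mul, Nat.cast_mul,
    mul_div_mul_comm]

lemma abundancyIndex_prime {p : ℕ} (hp : p.Prime) : p.abundancyIndex = 1 + 1 / p := by
  have : (p : ℚ) ≠ 0 := by exact_mod_cast hp.ne_zero
  rw [Nat.abundancyIndex, hp.sum_divisors]
  field_simp
  push_cast
  ring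

lemma sigma'_prime_pow_succ {p : ℕ} (hp : p.Prime) (k : ℕ) :
    sigma' (p ^ (k + 1)) = p * sigma' (p ^ k) + 1 := by
  rw [sigma', sigma', Nat.sum_divisors_prime_pow hp, Nat.sum_divisors_prime_pow hp,
    Finset.sum_range_succ', Finset.mul_sum]
  simp only [pow_succ', pow_zero]

lemma sigma'_pos {n : ℕ} (hn : n ≠ 0) : 0 < sigma' n :=
  Finset.sum_pos (fun _ hd => Nat.pos_of_mem_divisors hd) (Nat.nonempty_divisors.mpr hn)

lemma abundancyIndex_prime_pow_succ {p : ℕ} (hp : p.Prime) (k : ℕ) :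
    (p ^ (k + 1)).abundancyIndex =
      (p ^ k).abundancyIndex * (1 + 1 / (p * sigma' (p ^ k) : ℕ)) := by
  have hp0 : (p : ℚ) ≠ 0 := by exact_mod_cast hp.ne_zero
  have hσ0 : (sigma' (p ^ k) : ℚ) ≠ 0 := by
    exact_mod_cast (sigma'_pos (pow_ne_zero k hp.ne_zero)).ne'
  rw [abundancyIndex_eq_sigma'_div, abundancyIndex_eq_sigma'_div, sigma'_prime_pow_succ hp]
  field_simp
  push_cast
  ring

lemma exists_prime_dvd_and_dvd_div_of_dvd_of_lt {d n : ℕ} (hd : d ∣ n) (hdn : d < n) :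
    ∃ p, p.Prime ∧ p ∣ n ∧ d ∣ n / p := by
  obtain ⟨k, rfl⟩ := hd
  have hk : k ≠ 1 := by rintro rfl; simp at hdn
  refine ⟨k.minFac, Nat.minFac_prime hk, dvd_mul_of_dvd_right (Nat.minFac_dvd k) d, ?_⟩
  rw [Nat.mul_div_assoc _ (Nat.minFac_dvd k)]
  exact dvd_mul_right _ _

lemma Deficient.mul_div_prime {m p q : ℕ} (hm : Deficient m) (hp : p.Prime) (hpm : p ∣ m)
    (hq : q.Prime) (hqm : ¬ q ∣ m) (hσ : sigma' (p ^ m.factorization p) - 1 ≤ q) :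
    Deficient (q * (m / p)) := by
  have hm0 := hm.ne_zero
  obtain ⟨k, hk⟩ : ∃ k, m.factorization p = k + 1 :=
    Nat.exists_eq_succ_of_ne_zero (hp.factorization_pos_of_dvd hm0 hpm).ne'
  set m' := m / p ^ m.factorization p
  have hcop : p.Coprime m' := Nat.coprime_ordCompl hp hm0
  have hm_eq : m = p ^ (k + 1) * m' := by
    rw [← hk]; exact (Nat.ordProj_mul_ordCompl_eq_self m p).symm
  have hmp_eq : m / p = p ^ k * m' := by
    rw [hm_eq, pow_succ', mul_assoc, Nat.mul_div_cancel_left _ hp.pos]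
  have hqmp : q.Coprime (m / p) :=
    (hq.coprime_iff_not_dvd.mpr hqm).coprime_dvd_right (Nat.div_dvd_of_dvd hpm)
  have hle : p * sigma' (p ^ k) ≤ q := by
    rw [hk, sigma'_prime_pow_succ hp] at hσ; omega
  have hpos : 0 < p * sigma' (p ^ k) :=
    Nat.mul_pos hp.pos (sigma'_pos (pow_ne_zero k hp.ne_zero))
  rw [deficient_iff_abundancyIndex_lt_two
    (mul_ne_zero hq.ne_zero (Nat.div_ne_zero_iff_of_dvd hpm |>.mpr ⟨hm0, hp.ne_zero⟩))]
  calc (q * (m / p)).abundancyIndex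
      = (1 + 1 / q) * ((p ^ k).abundancyIndex * m'.abundancyIndex) := by
        rw [abundancyIndex_mul hqmp, abundancyIndex_prime hq, hmp_eq,
          abundancyIndex_mul (hcop.pow_left k)]
    _ ≤ (1 + 1 / (p * sigma' (p ^ k) : ℕ)) *
          ((p ^ k).abundancyIndex * m'.abundancyIndex) := by
        gcongr
        exact mul_nonneg (abundancyIndex_nonneg _) (abundancyIndex_nonneg _)
    _ = m.abundancyIndex := by
        rw [hm_eq, abundancyIndex_mul (hcop.pow_left _), abundancyIndex_prime_pow_succ hp]
        ring
    _ < 2 := (deficient_iff_abundancyIndex_lt_two hm0).mp hm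

/-- If `w = mq` is abundant, `m` is deficient, `q` is a prime not dividing `m`, and
`q ≥ σ(p^α) − 1` for every prime power `p^α` exactly dividing `m`, then `w` is
primitive abundant: `w` is abundant and every proper divisor of `w` is deficient. -/
theorem primitive_abundant_of_deficient_mul_prime (m q w : ℕ)
    (hw : w = m * q) (habw : Abundant w)
    (hm : Deficient m) (hq : q.Prime) (hqm : ¬ q ∣ m)
    (hbig : ∀ p α : ℕ, p.Prime → p ^ α ∣ m → ¬ p ^ (α + 1) ∣ m →
      sigma' (p ^ α) - 1 ≤ q) :
    Abundant w ∧ ∀ d ∈ w.properDivisors, Deficient d := by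
  refine ⟨habw, fun d hd => ?_⟩
  obtain ⟨hdw, hdlt⟩ := Nat.mem_properDivisors.mp hd
  rw [hw, mul_comm] at hdw hdlt
  by_cases hqd : q ∣ d
  · obtain ⟨d', rfl⟩ := hqd
    have hd'm : d' ∣ m := (Nat.mul_dvd_mul_iff_left hq.pos).mp hdw
    have hd'lt : d' < m := Nat.lt_of_mul_lt_mul_left hdlt
    obtain ⟨p, hp, hpm, hd'p⟩ := exists_prime_dvd_and_dvd_div_of_dvd_of_lt hd'm hd'lt
    have hσ := hbig p _ hp (Nat.ordProj_dvd m p)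
      (Nat.pow_succ_factorization_not_dvd hm.ne_zero hp)
    exact (hm.mul_div_prime hp hpm hq hqm hσ).of_dvd (mul_dvd_mul_left q hd'p)
  · exact hm.of_dvd (((hq.coprime_iff_not_dvd.mpr hqd).symm).dvd_of_dvd_mul_left hdw)
end

section
/- Let m > 1 be a deficient number, k > 1 an integer, and p_1, …, p_k primes with σ(m) + 1 < p_1 < ⋯ < p_k. Let h* = ⌊(p_1 − σ(m))/(p_k − p_1)⌋ and U = ⋃_{j=0}^{h*} { n ∈ ℕ : j·p_k + σ(m) < n < (j+1)·p_1 }. If w = m·p_1⋯p_k is abundant and Δ(w) ∈ U, then w is a primitive weird number, i.e., w is weird and no proper divisor of w is weird. -/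
lemma sigma'_mul_le {a b : ℕ} (hb : 0 < b) :
    sigma' a * b ≤ sigma' (a * b) := by
  classical
  have hinj : ∀ x ∈ a.divisors, ∀ y ∈ a.divisors, x * b = y * b → x = y :=
    fun x _ y _ h => Nat.eq_of_mul_eq_mul_right hb h
  have hsub : a.divisors.image (· * b) ⊆ (a * b).divisors := by
    intro x hx
    simp only [Finset.mem_image] at hx
    obtain ⟨d, hd, rfl⟩ := hx
    rw [Nat.mem_divisors] at hd ⊢
    have ha : a ≠ 0 := hd.2
    exact ⟨mul_dvd_mul hd.1 dvd_rfl, by positivity⟩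
  calc sigma' a * b = ∑ d ∈ a.divisors, d * b := by rw [sigma', Finset.sum_mul]
    _ = ∑ x ∈ a.divisors.image (· * b), x :=
        (Finset.sum_image (g := (· * b)) (f := fun x => x) hinj).symm
    _ ≤ sigma' (a * b) := Finset.sum_le_sum_of_subset hsub

lemma sigma'_mul_add_one_le {a b : ℕ} (ha : 0 < a) (hb : 2 ≤ b) :
    sigma' a * b + 1 ≤ sigma' (a * b) := by
  classical
  have hinj : ∀ x ∈ a.divisors, ∀ y ∈ a.divisors, x * b = y * b → x = y :=
    fun x _ y _ h => Nat.eq_of_mul_eq_mul_right (by omega) h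
  have hab : a * b ≠ 0 := by positivity
  have h1 : (1 : ℕ) ∈ (a * b).divisors := Nat.one_mem_divisors.2 hab
  have hsub : a.divisors.image (· * b) ⊆ (a * b).divisors.erase 1 := by
    intro x hx
    simp only [Finset.mem_image] at hx
    obtain ⟨d, hd, rfl⟩ := hx
    have hdpos : 0 < d := Nat.pos_of_mem_divisors hd
    rw [Finset.mem_erase, Nat.mem_divisors]
    exact ⟨by nlinarith, mul_dvd_mul (Nat.mem_divisors.1 hd).1 dvd_rfl, hab⟩
  have h3 : sigma' a * b ≤ ∑ x ∈ (a * b).divisors.erase 1, x := by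
    calc sigma' a * b = ∑ d ∈ a.divisors, d * b := by rw [sigma', Finset.sum_mul]
      _ = ∑ x ∈ a.divisors.image (· * b), x :=
          (Finset.sum_image (g := (· * b)) (f := fun x => x) hinj).symm
      _ ≤ _ := Finset.sum_le_sum_of_subset hsub
  have h2 : (1 : ℕ) + ∑ x ∈ (a * b).divisors.erase 1, x = sigma' (a * b) :=
    Finset.add_sum_erase _ (fun x => x) h1
  omega

lemma deficient_of_dvd {d n : ℕ} (h : d ∣ n) (hn : 0 < n) (hdef : Deficient n) :
    Deficient d := by
  obtain ⟨e, rfl⟩ := h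
  have he : 0 < e := Nat.pos_of_ne_zero (by rintro rfl; simp at hn)
  have h2 : sigma' d * e < 2 * d * e := by
    calc sigma' d * e ≤ sigma' (d * e) := sigma'_mul_le he
      _ < 2 * (d * e) := hdef
      _ = 2 * d * e := by ring
  exact lt_of_mul_lt_mul_right h2 (Nat.zero_le e)

lemma sigma'_mul_coprime {a b : ℕ} (h : Nat.Coprime a b) :
    sigma' (a * b) = sigma' a * sigma' b := h.sum_divisors_mul

lemma sigma'_prime {q : ℕ} (hq : q.Prime) : sigma' q = q + 1 := by
  rw [sigma', Nat.Prime.divisors hq, Finset.sum_pair hq.one_lt.ne]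
  omega

lemma one_add_le_sigma' {n : ℕ} (h : 1 < n) : n + 1 ≤ sigma' n := by
  have h1 : (1 : ℕ) ∈ n.properDivisors := Nat.one_mem_properDivisors_iff_one_lt.2 h
  have h2 : 1 ≤ ∑ i ∈ n.properDivisors, i :=
    Finset.single_le_sum (f := fun d => d) (fun i _ => Nat.zero_le i) h1
  have h3 : sigma' n = ∑ i ∈ n.properDivisors, i + n := by
    rw [sigma', ← Nat.sum_divisors_eq_sum_properDivisors_add_self]
  omega

lemma sigma'_self_le {n : ℕ} (h : 0 < n) : n ≤ sigma' n := by
  have h1 : n ∈ n.divisors := Nat.mem_divisors_self n (by omega)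
  exact Finset.single_le_sum (f := fun d => d) (fun i _ => Nat.zero_le i) h1


/-- Theorem 3 (main theorem), part 1.  Let `m > 1` be deficient, `k > 1`, and
`p 0 < p 1 < ⋯ < p (k-1)` primes with `σ(m) + 1 < p 0`.  With
`h* = ⌊(p 0 − σ(m)) / (p (k-1) − p 0)⌋` and
`U = ⋃_{j ≤ h*} (j · p (k-1) + σ(m), (j+1) · p 0)`,
if `w = m · p 0 ⋯ p (k-1)` is abundant and `Δ(w) ∈ U`, then `w` is a primitive
weird number: `w` is weird and no proper divisor of `w` is weird. -/
theorem primitive_weird_of_abundance_mem_U (m k : ℕ) (p : ℕ → ℕ) (w : ℕ)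
    (hm : 1 < m) (hdef : Deficient m) (hk : 1 < k)
    (hprime : ∀ i < k, (p i).Prime)
    (hmono : ∀ i j, i < j → j < k → p i < p j)
    (hp1 : sigma' m + 1 < p 0)
    (hw : w = m * ∏ i ∈ Finset.range k, p i)
    (hab : Abundant w)
    (hU : ∃ j ≤ (p 0 - sigma' m) / (p (k - 1) - p 0),
      j * p (k - 1) + sigma' m < sigma' w - 2 * w ∧
        sigma' w - 2 * w < (j + 1) * p 0) :
    Weird w ∧ ∀ d ∈ w.properDivisors, ¬ Weird d := by
  classical
  obtain ⟨j, hj, hΔl, hΔu⟩ := hU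
  obtain ⟨P, hPdef⟩ : ∃ P, ∏ i ∈ Finset.range k, p i = P := ⟨_, rfl⟩
  rw [hPdef] at hw
  obtain ⟨Δ, hΔdef⟩ : ∃ D, sigma' w - 2 * w = D := ⟨_, rfl⟩
  rw [hΔdef] at hΔl hΔu
  have h0k : 0 < k := by omega
  have hk1 : k - 1 < k := by omega
  have hsm : m + 1 ≤ sigma' m := one_add_le_sigma' hm
  have hple : ∀ i, i < k → p 0 ≤ p i := by
    intro i hik
    rcases Nat.eq_zero_or_pos i with rfl | hi
    · exact le_rfl
    · exact (hmono 0 i hi hik).le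
  have hple' : ∀ i, i < k → p i ≤ p (k - 1) := by
    intro i hik
    rcases eq_or_lt_of_le (by omega : i ≤ k - 1) with h | h
    · rw [h]
    · exact (hmono i (k - 1) h hk1).le
  have hprimepos : ∀ i, i < k → 0 < p i := fun i hik => (hprime i hik).pos
  have hp0pos : 0 < p 0 := hprimepos 0 h0k
  have hpm : ∀ i, i < k → ¬ p i ∣ m := by
    intro i hik hdvd
    have h1 := Nat.le_of_dvd (by omega) hdvd
    have h2 := hple i hik
    omega
  have hcopm : ∀ i, i < k → Nat.Coprime (p i) m := fun i hik =>
    ((hprime i hik).coprime_iff_not_dvd).2 (hpm i hik)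
  have hcopP : Nat.Coprime m P := hPdef ▸ (Nat.Coprime.prod_right fun i hi =>
    (hcopm i (Finset.mem_range.1 hi)).symm)
  have hPpos : 0 < P :=
    hPdef ▸ (Finset.prod_pos fun i hi => hprimepos i (Finset.mem_range.1 hi))
  have hwpos : 0 < w := by rw [hw]; exact Nat.mul_pos (by omega) hPpos
  have habn : 2 * w < sigma' w := hab
  have hσw : sigma' w = 2 * w + Δ := by omega
  have hσwP : sigma' w = sigma' m * sigma' P := by rw [hw]; exact sigma'_mul_coprime hcopP
  -- j bounds
  have hgpos : 0 < p (k - 1) - p 0 := by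
    have := hmono 0 (k - 1) (by omega) hk1; omega
  have hjg : j * (p (k - 1) - p 0) ≤ p 0 - sigma' m := (Nat.le_div_iff_mul_le hgpos).1 hj
  have hjle : j ≤ p 0 - sigma' m := le_trans (Nat.le_mul_of_pos_right j hgpos) hjg
  have hjs : j + sigma' m ≤ p 0 := by omega
  have hΔsq : Δ < p 0 * p 0 := by
    have h1 : (j + 1) * p 0 ≤ (p 0 - 2) * p 0 := Nat.mul_le_mul (by omega) le_rfl
    have h2 : (p 0 - 2) * p 0 < p 0 * p 0 :=
      mul_lt_mul_of_pos_right (by omega) hp0pos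
    exact lt_trans (lt_of_lt_of_le hΔu h1) h2
  -- product lower bound
  have hPge : p 0 ^ (k - 1) * p (k - 1) ≤ P := by
    have hk1' : k - 1 + 1 = k := by omega
    have hsplit : (∏ i ∈ Finset.range (k - 1), p i) * p (k - 1) = P := by
      rw [← Finset.prod_range_succ, hk1', hPdef]
    rw [← hsplit]
    refine Nat.mul_le_mul ?_ le_rfl
    calc p 0 ^ (k - 1) = ∏ _i ∈ Finset.range (k - 1), p 0 := by
          rw [Finset.prod_const, Finset.card_range]
      _ ≤ ∏ i ∈ Finset.range (k - 1), p i :=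
          Finset.prod_le_prod (fun i _ => Nat.zero_le _)
            (fun i hi => hple i (by have := Finset.mem_range.1 hi; omega))
  -- Lemma A : Δ * p i < 2 * w
  have hA : ∀ i, i < k → Δ * p i < 2 * w := by
    suffices h : Δ * p (k - 1) < 2 * w by
      intro i hik
      exact lt_of_le_of_lt (Nat.mul_le_mul le_rfl (hple' i hik)) h
    by_contra hcon
    push_neg at hcon
    have hpk1pos : 0 < p (k - 1) := hprimepos _ hk1
    rw [hw] at hcon
    have h1 : 2 * m * (p 0 ^ (k - 1) * p (k - 1)) ≤ 2 * (m * P) := by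
      calc 2 * m * (p 0 ^ (k - 1) * p (k - 1)) ≤ 2 * m * P :=
            Nat.mul_le_mul le_rfl hPge
        _ = 2 * (m * P) := by ring
    have h2 : Δ * p (k - 1) < ((j + 1) * p 0) * p (k - 1) :=
      mul_lt_mul_of_pos_right hΔu hpk1pos
    have h3 : (2 * m * p 0 ^ (k - 1)) * p (k - 1) < ((j + 1) * p 0) * p (k - 1) := by
      calc (2 * m * p 0 ^ (k - 1)) * p (k - 1)
          = 2 * m * (p 0 ^ (k - 1) * p (k - 1)) := by ring
        _ ≤ 2 * (m * P) := h1
        _ ≤ Δ * p (k - 1) := hcon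
        _ < _ := h2
    have hstep : 2 * m * p 0 ^ (k - 1) < (j + 1) * p 0 :=
      lt_of_mul_lt_mul_right h3 (Nat.zero_le _)
    rcases Nat.lt_or_ge k 3 with hk3 | hk3
    · -- k = 2
      have hk2 : k = 2 := by omega
      subst hk2
      have h21 : (2 : ℕ) - 1 = 1 := rfl
      rw [h21, pow_one] at hstep
      rw [h21] at hΔl hple' hpk1pos
      have hp01 : p 0 < p 1 := hmono 0 1 Nat.one_pos (by omega)
      have hcop01 : Nat.Coprime (p 0) (p 1) :=
        (Nat.coprime_primes (hprime 0 (by omega)) (hprime 1 (by omega))).2 hp01.ne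
      have hP2 : P = p 0 * p 1 := by
        rw [← hPdef, Finset.prod_range_succ, Finset.prod_range_one]
      have hσP2 : sigma' P = (p 0 + 1) * (p 1 + 1) := by
        rw [hP2, sigma'_mul_coprime hcop01, sigma'_prime (hprime 0 (by omega)),
          sigma'_prime (hprime 1 (by omega))]
      have hwv : w = m * (p 0 * p 1) := by rw [hw, hP2]
      have heq : sigma' m * ((p 0 + 1) * (p 1 + 1)) = 2 * (m * (p 0 * p 1)) + Δ := by
        rw [← hσP2, ← hσwP, hσw, hwv]
      have h2mj : 2 * m ≤ j := by
        have := lt_of_mul_lt_mul_right hstep (Nat.zero_le (p 0))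
        omega
      have h2mb : 2 * m * p 1 ≤ j * p 1 := Nat.mul_le_mul h2mj le_rfl
      have hdefm' : sigma' m + 1 ≤ 2 * m := hdef
      have hsp0 : sigma' m + 2 ≤ p 0 := by omega
      have hB : (sigma' m + 1) * (p 0 * p 1) ≤ 2 * m * (p 0 * p 1) :=
        Nat.mul_le_mul hdefm' le_rfl
      have hC : (sigma' m + 2) * p 1 ≤ p 0 * p 1 := Nat.mul_le_mul hsp0 le_rfl
      have hD : (sigma' m + 1) * p 0 ≤ 2 * m * p 0 := Nat.mul_le_mul hdefm' le_rfl
      have hD2 : 2 * m * p 0 ≤ 2 * m * p 1 := Nat.mul_le_mul le_rfl hp01.le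
      linarith only [heq, hΔl, h2mb, hB, hC, hD, hD2]
    · -- k ≥ 3
      have hpow : p 0 * p 0 ≤ p 0 ^ (k - 1) := by
        calc p 0 * p 0 = p 0 ^ 2 := by ring
          _ ≤ p 0 ^ (k - 1) := Nat.pow_le_pow_right hp0pos (by omega)
      have h4 : (j + 1) * p 0 ≤ p 0 * p 0 := Nat.mul_le_mul (by omega) le_rfl
      have h5 : 2 * m * (p 0 * p 0) ≤ 2 * m * p 0 ^ (k - 1) :=
        Nat.mul_le_mul le_rfl hpow
      have h6 : 1 * (p 0 * p 0) ≤ (2 * m) * (p 0 * p 0) := Nat.mul_le_mul (by omega) le_rfl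
      linarith only [hstep, h4, h5, h6]
  -- distinct p's
  have hpinj : ∀ l i', l < k → i' < k → l ≠ i' → p l ≠ p i' := by
    intro l i' hl hi' hne
    rcases Nat.lt_or_ge l i' with h | h
    · exact (hmono l i' h hi').ne
    · exact (hmono i' l (by omega) hl).ne'
  -- the key structural claim
  have key : ∀ d, d ∣ w → ¬ d ∣ m → d < p 0 * p 0 →
      ∃ i, i < k ∧ d = Nat.gcd d m * p i := by
    intro d hdw hdm hdlt
    have hdpos : 0 < d := Nat.pos_of_dvd_of_pos hdw hwpos
    have hex : ∃ i, i < k ∧ p i ∣ d := by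
      by_contra hno
      push_neg at hno
      have hcopd : Nat.Coprime d P := hPdef ▸ (Nat.Coprime.prod_right fun i hi =>
        (((hprime i (Finset.mem_range.1 hi)).coprime_iff_not_dvd).2
          (hno i (Finset.mem_range.1 hi))).symm)
      exact hdm (hcopd.dvd_of_dvd_mul_right (hw ▸ hdw))
    obtain ⟨i, hik, hpid⟩ := hex
    obtain ⟨e, he⟩ := hpid
    have hpipos : 0 < p i := hprimepos i hik
    have huniq : ∀ l, l < k → l ≠ i → ¬ p l ∣ d := by
      intro l hlk hli hpld
      have hcop' : Nat.Coprime (p l) (p i) :=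
        (Nat.coprime_primes (hprime l hlk) (hprime i hik)).2 (hpinj l i hlk hik hli)
      have hmul : p l * p i ∣ d := hcop'.mul_dvd_of_dvd_of_dvd hpld ⟨e, he⟩
      have hge : p 0 * p 0 ≤ p l * p i := Nat.mul_le_mul (hple l hlk) (hple i hik)
      have := Nat.le_of_dvd hdpos hmul
      omega
    have hpie : ¬ p i ∣ e := by
      intro hpe
      have hmul : p i * p i ∣ d := by
        rw [he]; exact mul_dvd_mul_left (p i) hpe
      have hge : p 0 * p 0 ≤ p i * p i := Nat.mul_le_mul (hple i hik) (hple i hik)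
      have := Nat.le_of_dvd hdpos hmul
      omega
    obtain ⟨Q, hQdef⟩ : ∃ Q, ∏ l ∈ (Finset.range k).erase i, p l = Q := ⟨_, rfl⟩
    have hPQ : P = p i * Q := by
      rw [← hPdef, ← hQdef]
      exact (Finset.mul_prod_erase _ _ (Finset.mem_range.2 hik)).symm
    have hedvd : e ∣ m * Q := by
      have h1 : p i * e ∣ p i * (m * Q) := by
        rw [← he]
        have hww : w = p i * (m * Q) := by rw [hw, hPQ]; ring
        exact hww ▸ hdw
      exact (mul_dvd_mul_iff_left (by omega : p i ≠ 0)).1 h1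
    have hecop : Nat.Coprime e Q := by
      rw [← hQdef]
      apply Nat.Coprime.prod_right
      intro l hl
      have hlk : l < k := Finset.mem_range.1 (Finset.mem_of_mem_erase hl)
      have hli : l ≠ i := Finset.ne_of_mem_erase hl
      refine (((hprime l hlk).coprime_iff_not_dvd).2 fun hdvd => ?_).symm
      exact huniq l hlk hli (by rw [he]; exact Dvd.dvd.mul_left hdvd (p i))
    have hem : e ∣ m := hecop.dvd_of_dvd_mul_right hedvd
    have hgcd : Nat.gcd d m = e := by
      apply Nat.dvd_antisymm
      · have h1 : Nat.Coprime (Nat.gcd d m) (p i) :=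
          Nat.Coprime.coprime_dvd_left (Nat.gcd_dvd_right d m) (hcopm i hik).symm
        have h2 : Nat.gcd d m ∣ p i * e := he ▸ Nat.gcd_dvd_left d m
        exact Nat.Coprime.dvd_of_dvd_mul_left h1 h2
      · exact Nat.dvd_gcd ⟨p i, by rw [he]; ring⟩ hem
    exact ⟨i, hik, by rw [hgcd, he, mul_comm]⟩
  -- deficiency of w / q for every prime q dividing w
  have hdefu : ∀ q : ℕ, q.Prime → ∀ u, w = u * q → Deficient u := by
    intro q hq u huq
    have hqw : q ∣ w := ⟨u, by rw [huq, mul_comm]⟩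
    rcases (Nat.Prime.dvd_mul hq).1 (hw ▸ hqw) with hqm | hqP
    · -- q ∣ m
      obtain ⟨m', hm'⟩ := hqm
      have hm'pos : 0 < m' := Nat.pos_of_ne_zero (by rintro rfl; rw [mul_zero] at hm'; omega)
      have hu : u = m' * P := by
        have hh : (m' * P) * q = u * q := by rw [← huq, hw, hm']; ring
        exact (Nat.eq_of_mul_eq_mul_right hq.pos hh).symm
      have hcop' : Nat.Coprime m' P :=
        Nat.Coprime.coprime_dvd_left ⟨q, by rw [hm']; ring⟩ hcopP
      have hσu : sigma' u = sigma' m' * sigma' P := by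
        rw [hu]; exact sigma'_mul_coprime hcop'
      have hqs : sigma' m' * q + 1 ≤ sigma' m := by
        have hh := sigma'_mul_add_one_le hm'pos hq.two_le (a := m')
        rwa [show m' * q = m by rw [hm']; ring] at hh
      have hPbig : p 0 * p 0 ≤ P := by
        calc p 0 * p 0 ≤ p 0 ^ (k - 1) * p (k - 1) :=
              Nat.mul_le_mul (Nat.le_self_pow (by omega) _) (hple' 0 h0k)
          _ ≤ P := hPge
      have hΔP : Δ < sigma' P := lt_of_lt_of_le hΔsq (le_trans hPbig (sigma'_self_le hPpos))
      by_contra hnd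
      have hnd2 : 2 * u ≤ sigma' u := not_lt.mp hnd
      have h1 : q * (sigma' m' * sigma' P) + sigma' P ≤ sigma' m * sigma' P := by
        calc q * (sigma' m' * sigma' P) + sigma' P
            = (sigma' m' * q + 1) * sigma' P := by ring
          _ ≤ sigma' m * sigma' P := Nat.mul_le_mul hqs le_rfl
      have h2 : sigma' m * sigma' P = 2 * w + Δ := by rw [← hσwP, hσw]
      have h4 : 2 * w ≤ q * (sigma' m' * sigma' P) := by
        calc 2 * w = (2 * u) * q := by rw [huq]; ring
          _ ≤ sigma' u * q := Nat.mul_le_mul hnd2 le_rfl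
          _ = q * (sigma' m' * sigma' P) := by rw [hσu]; ring
      linarith only [h1, h2, h4, hΔP]
    · -- q = p i
      rw [← hPdef] at hqP
      obtain ⟨i, hi, hqpi⟩ := hq.prime.exists_mem_finset_dvd hqP
      have hik := Finset.mem_range.1 hi
      have hqpi' : q = p i := (Nat.prime_dvd_prime_iff_eq hq (hprime i hik)).1 hqpi
      obtain ⟨Q, hQdef⟩ : ∃ Q, ∏ l ∈ (Finset.range k).erase i, p l = Q := ⟨_, rfl⟩
      have hPQ : P = p i * Q := by
        rw [← hPdef, ← hQdef]
        exact (Finset.mul_prod_erase _ _ hi).symm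
      have hu : u = m * Q := by
        have hh : (m * Q) * q = u * q := by rw [← huq, hw, hPQ, hqpi']; ring
        exact (Nat.eq_of_mul_eq_mul_right hq.pos hh).symm
      have hcopQ : Nat.Coprime (m * Q) (p i) := by
        refine Nat.Coprime.mul (hcopm i hik).symm ?_
        rw [← hQdef]
        apply Nat.Coprime.prod_left
        intro l hl
        have hlk : l < k := Finset.mem_range.1 (Finset.mem_of_mem_erase hl)
        have hli : l ≠ i := Finset.ne_of_mem_erase hl
        exact (Nat.coprime_primes (hprime l hlk) (hprime i hik)).2 (hpinj l i hlk hik hli)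
      have hwEq : w = (m * Q) * p i := by rw [hw, hPQ]; ring
      have hσu' : sigma' w = sigma' (m * Q) * (p i + 1) := by
        rw [hwEq, sigma'_mul_coprime hcopQ, sigma'_prime (hprime i hik)]
      by_contra hnd
      have hnd2 : 2 * u ≤ sigma' u := not_lt.mp hnd
      rw [hu] at hnd2
      have hc1 : 2 * w + 2 * (m * Q) ≤ 2 * w + Δ := by
        calc 2 * w + 2 * (m * Q) = (2 * (m * Q)) * (p i + 1) := by rw [hwEq]; ring
          _ ≤ sigma' (m * Q) * (p i + 1) := Nat.mul_le_mul hnd2 le_rfl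
          _ = 2 * w + Δ := by rw [← hσu', hσw]
      have h6 : 2 * (m * Q) ≤ Δ := by omega
      have h8 : 2 * w ≤ Δ * p i := by
        calc 2 * w = (2 * (m * Q)) * p i := by rw [hwEq]; ring
          _ ≤ Δ * p i := Nat.mul_le_mul h6 le_rfl
      exact absurd (hA i hik) (not_lt.mpr h8)
  constructor
  · -- w is weird
    refine ⟨hab, ?_⟩
    rintro ⟨S, hS, hsum⟩
    have hproper : ∑ i ∈ w.properDivisors, i + w = sigma' w := by
      rw [sigma', ← Nat.sum_divisors_eq_sum_properDivisors_add_self]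
    have hsdiff : ∑ d ∈ w.properDivisors \ S, d + ∑ d ∈ S, d = ∑ d ∈ w.properDivisors, d :=
      Finset.sum_sdiff hS
    set T := w.properDivisors \ S with hT
    have hTsum : ∑ d ∈ T, d = Δ := by omega
    have hfil := Finset.sum_filter_add_sum_filter_not T (fun d => d ∣ m) (fun d => d)
    set T₀ := T.filter (fun d => d ∣ m) with hT₀def
    set T₁ := T.filter (fun d => ¬ d ∣ m) with hT₁def
    have hT0 : ∑ d ∈ T₀, d ≤ sigma' m := by
      apply Finset.sum_le_sum_of_subset
      intro x hx
      have hxm : x ∣ m := (Finset.mem_filter.1 hx).2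
      exact Nat.mem_divisors.2 ⟨hxm, by omega⟩
    have hdecomp : ∀ d ∈ T₁, p 0 * Nat.gcd d m ≤ d ∧ d ≤ p (k - 1) * Nat.gcd d m := by
      intro d hd
      obtain ⟨hdT, hdm⟩ := Finset.mem_filter.1 hd
      have hdw : d ∣ w := (Nat.mem_properDivisors.1 (Finset.mem_sdiff.1 hdT).1).1
      have hdle : d ≤ Δ := by
        rw [← hTsum]
        exact Finset.single_le_sum (f := fun x => x) (fun i _ => Nat.zero_le i) hdT
      obtain ⟨i, hik, hgcd⟩ := key d hdw hdm (lt_of_le_of_lt hdle hΔsq)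
      constructor
      · calc p 0 * Nat.gcd d m ≤ p i * Nat.gcd d m :=
              Nat.mul_le_mul (hple i hik) le_rfl
          _ = d := by rw [mul_comm]; exact hgcd.symm
      · calc d = p i * Nat.gcd d m := by rw [mul_comm]; exact hgcd
          _ ≤ p (k - 1) * Nat.gcd d m := Nat.mul_le_mul (hple' i hik) le_rfl
    set X := ∑ d ∈ T₁, Nat.gcd d m with hX
    have hlow : p 0 * X ≤ ∑ d ∈ T₁, d := by
      rw [hX, Finset.mul_sum]
      exact Finset.sum_le_sum fun d hd => (hdecomp d hd).1
    have hhigh : ∑ d ∈ T₁, d ≤ p (k - 1) * X := by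
      rw [hX, Finset.mul_sum]
      exact Finset.sum_le_sum fun d hd => (hdecomp d hd).2
    have hT1Δ : ∑ d ∈ T₁, d ≤ Δ := by
      rw [← hTsum]
      exact Finset.sum_le_sum_of_subset (Finset.filter_subset _ _)
    have hXj : X ≤ j := by
      by_contra hc
      push_neg at hc
      have h9 : p 0 * (j + 1) ≤ p 0 * X := Nat.mul_le_mul le_rfl (by omega)
      linarith only [hlow, hT1Δ, hΔu, h9]
    have hXmul : p (k - 1) * X ≤ p (k - 1) * j := Nat.mul_le_mul le_rfl hXj
    have hsplitsum : ∑ d ∈ T₀, d + ∑ d ∈ T₁, d = Δ := by rw [hfil, hTsum]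
    linarith only [hT0, hhigh, hXmul, hΔl, hsplitsum]
  · -- primitivity
    intro d hd hWd
    obtain ⟨hdvd, hdlt⟩ := Nat.mem_properDivisors.1 hd
    obtain ⟨e, he⟩ := hdvd
    have he1 : 1 < e := by
      have h0 : e ≠ 0 := by rintro rfl; rw [mul_zero] at he; omega
      have h1 : e ≠ 1 := by rintro rfl; rw [mul_one] at he; omega
      omega
    obtain ⟨q, hq, hqe⟩ := Nat.exists_prime_and_dvd (by omega : e ≠ 1)
    obtain ⟨f, hf⟩ := hqe
    have hu : w = (d * f) * q := by rw [he, hf]; ring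
    have hdef_u := hdefu q hq (d * f) hu
    have hfpos : 0 < d * f := Nat.pos_of_ne_zero (by
      rintro h; rw [h, zero_mul] at hu; omega)
    have hdefd : Deficient d := deficient_of_dvd (dvd_mul_right d f) hfpos hdef_u
    have habd : 2 * d < sigma' d := hWd.1
    have hdefd' : sigma' d < 2 * d := hdefd
    omega
end

section
/- Let m > 1 be a deficient number, k > 1 an integer, and p_1, …, p_k primes with σ(m) + 1 < p_1 < ⋯ < p_k. Let h* = ⌊(p_1 − σ(m))/(p_k − p_1)⌋ and U = ⋃_{j=0}^{h*} { n ∈ ℕ : j·p_k + σ(m) < n < (j+1)·p_1 }. Suppose w̃ = m·p_1⋯p_k is deficient and p is a prime with p_k < p < 2w̃/d(w̃) − 1. If Δ(w̃·p) ∈ U, then p > 2w̃/d(w̃) − 1 − (1 + h*)·p_1/d(w̃). -/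
/-- Theorem 3, part 2 (lower bound on the extra prime).  In the setting of the main
theorem, if `w̃ = m · p 0 ⋯ p (k-1)` is deficient, `q` is a prime with
`p (k-1) < q < 2w̃/d(w̃) − 1`, and `Δ(w̃·q) ∈ U`, then
`q > 2w̃/d(w̃) − 1 − (1 + h*)·p 0 / d(w̃)`. -/
theorem lower_bound_on_extra_prime (m k : ℕ) (p : ℕ → ℕ) (q wt : ℕ)
    (hm : 1 < m) (hdef : Deficient m) (hk : 1 < k)
    (hprime : ∀ i < k, (p i).Prime)
    (hmono : ∀ i j, i < j → j < k → p i < p j)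
    (hp1 : sigma' m + 1 < p 0)
    (hwt : wt = m * ∏ i ∈ Finset.range k, p i)
    (hwtdef : Deficient wt)
    (hq : q.Prime) (hqgt : p (k - 1) < q)
    (hqlt : (q : ℚ) < 2 * wt / (2 * wt - sigma' wt) - 1)
    (hU : ∃ j ≤ (p 0 - sigma' m) / (p (k - 1) - p 0),
      j * p (k - 1) + sigma' m < sigma' (wt * q) - 2 * (wt * q) ∧
        sigma' (wt * q) - 2 * (wt * q) < (j + 1) * p 0) :
    (q : ℚ) > 2 * wt / (2 * wt - sigma' wt) - 1 -
      ((1 + (p 0 - sigma' m) / (p (k - 1) - p 0) : ℕ) : ℚ) * p 0 /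
        (2 * wt - sigma' wt) := by
  set h : ℕ := (p 0 - sigma' m) / (p (k - 1) - p 0) with hh
  set d : ℕ := 2 * wt - sigma' wt with hd
  -- basic facts
  have hσm : m ≤ sigma' m := by
    have : m ∈ m.divisors := Nat.mem_divisors_self m (by omega)
    exact Finset.single_le_sum (fun i _ => Nat.zero_le i) this
  have hple : ∀ i < k, p i ≤ p (k - 1) := by
    intro i hi
    rcases lt_or_eq_of_le (Nat.le_sub_one_of_lt hi) with h' | h'
    · exact le_of_lt (hmono i (k-1) h' (by omega))
    · rw [h']
  have hp0le : p 0 ≤ p (k - 1) := hple 0 (by omega)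
  have hqm : m < q := by omega
  -- coprimality
  have hcop : Nat.Coprime wt q := by
    rw [Nat.coprime_comm, hq.coprime_iff_not_dvd]
    intro hdvd
    rw [hwt] at hdvd
    rcases (Nat.Prime.dvd_mul hq).1 hdvd with h' | h'
    · exact absurd (Nat.le_of_dvd (by omega) h') (by omega)
    · obtain ⟨i, hi, hdvd'⟩ := hq.prime.exists_mem_finset_dvd h'
      simp only [Finset.mem_range] at hi
      have := (Nat.prime_dvd_prime_iff_eq hq (hprime i hi)).1 hdvd'
      have := hple i hi
      omega
  -- σ(wt*q) = σ(wt)*(q+1)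
  have hσq : sigma' q = 1 + q := by
    rw [sigma', hq.divisors, Finset.sum_pair hq.one_lt.ne]
  have hmul : sigma' (wt * q) = sigma' wt * (1 + q) := by
    rw [sigma', hcop.sum_divisors_mul, ← sigma', ← sigma', hσq]
  -- key nat inequality
  obtain ⟨j, hj, hlo, hhi⟩ := hU
  rw [hmul] at hlo hhi
  have hdpos : 0 < d := by
    have := hwtdef; unfold Deficient at this; omega
  have hkey : 2 * wt < d * (q + 1) + (1 + h) * p 0 := by
    -- sigma' wt * (1+q) - 2*(wt*q) = sigma' wt - d*q  (nat identity)
    have hsd : sigma' wt + d = 2 * wt := by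
      have : sigma' wt < 2 * wt := hwtdef
      rw [hd]; omega
    have e2 : 2 * (wt * q) = sigma' wt * q + d * q := by
      rw [← add_mul, hsd]; ring
    have e : sigma' wt * (1 + q) - 2 * (wt * q) = sigma' wt - d * q := by
      rw [e2, mul_add, mul_one]; omega
    rw [e] at hlo hhi
    have hσmpos : 0 < sigma' m := by omega
    have h1 : d * q < sigma' wt := by omega
    have h2 : sigma' wt < d * q + (j + 1) * p 0 := by omega
    have h3 : (j + 1) * p 0 ≤ (1 + h) * p 0 := by
      apply Nat.mul_le_mul_right; omega
    have : sigma' wt + d = 2 * wt := by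
      have := le_of_lt hwtdef; omega
    nlinarith
  -- rational arithmetic
  have hdcast : (d : ℚ) = 2 * wt - sigma' wt := by
    rw [hd]; push_cast [Nat.sub_le, le_of_lt hwtdef]; ring
  have hDpos : (0 : ℚ) < 2 * wt - sigma' wt := by
    rw [← hdcast]; exact_mod_cast hdpos
  rw [gt_iff_lt, sub_sub, sub_lt_iff_lt_add, div_lt_iff₀ hDpos]
  have hkeyQ : 2 * (wt : ℚ) < d * (q + 1) + (1 + h) * p 0 := by exact_mod_cast hkey
  rw [← hdcast]
  push_cast
  rw [add_mul, add_mul, div_mul_cancel₀]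
  · nlinarith [hkeyQ]
  · exact_mod_cast hdpos.ne'
end

section
/- Let m > 1 be a deficient number, k > 1 an integer, and p_1, …, p_k primes with σ(m) + 1 < p_1 < ⋯ < p_k. Let h* = ⌊(p_1 − σ(m))/(p_k − p_1)⌋ and U = ⋃_{j=0}^{h*} { n ∈ ℕ : j·p_k + σ(m) < n < (j+1)·p_1 }. Suppose w̃ = m·p_1⋯p_k is deficient and p is a prime with p_k < p < 2w̃/d(w̃) − 1. If Δ(w̃·p) ∈ U and p > Δ(w̃·p), then w = w̃·p is a primitive weird number, i.e., w is weird and no proper divisor of w is weird. -/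
lemma aux_sigma'_mul {a b : ℕ} (h : a.Coprime b) : sigma' (a * b) = sigma' a * sigma' b :=
  h.sum_divisors_mul

lemma aux_sigma'_prime {r : ℕ} (hr : r.Prime) : sigma' r = r + 1 := by
  rw [sigma', hr.divisors, Finset.sum_pair hr.one_lt.ne]
  omega

lemma aux_key {d e : ℕ} (hd : 0 < d) (he : 2 ≤ e) :
    e * sigma' d + 1 ≤ sigma' (d * e) := by
  classical
  have he0 : 0 < e := by omega
  have hde : 0 < d * e := Nat.mul_pos hd he0
  set I := d.divisors.image (· * e) with hI
  have hsub : insert 1 I ⊆ (d * e).divisors := by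
    intro x hx
    rcases Finset.mem_insert.mp hx with rfl | hx
    · exact Nat.one_mem_divisors.mpr hde.ne'
    · rcases Finset.mem_image.mp hx with ⟨y, hy, rfl⟩
      exact Nat.mem_divisors.mpr ⟨mul_dvd_mul (Nat.mem_divisors.mp hy).1 dvd_rfl, hde.ne'⟩
  have h1 : 1 ∉ I := by
    intro hx
    rcases Finset.mem_image.mp hx with ⟨y, hy, hye⟩
    have hy0 : 0 < y := Nat.pos_of_mem_divisors hy
    nlinarith [hye, hy0]
  have hsum : ∑ x ∈ insert 1 I, x = 1 + e * sigma' d := by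
    rw [Finset.sum_insert h1]
    congr 1
    rw [hI, Finset.sum_image (by
      intro a _ b _ hab
      exact Nat.eq_of_mul_eq_mul_right he0 hab)]
    rw [← Finset.sum_mul, sigma', mul_comm]
  calc e * sigma' d + 1 = ∑ x ∈ insert 1 I, x := by omega
    _ ≤ sigma' (d * e) := Finset.sum_le_sum_of_subset hsub

lemma aux_deficient_dvd {n d : ℕ} (hn : 0 < n) (h : d ∣ n) (hdef : Deficient n) :
    Deficient d := by
  obtain ⟨e, rfl⟩ := h
  have hd : 0 < d := by
    rcases Nat.eq_zero_or_pos d with h' | h'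
    · subst h'; simp at hn
    · exact h'
  have he : 0 < e := by
    rcases Nat.eq_zero_or_pos e with h' | h'
    · subst h'; simp at hn
    · exact h'
  rcases Nat.lt_or_ge e 2 with he1 | he2
  · have : e = 1 := by omega
    subst this
    simpa using hdef
  · have hkey := aux_key hd he2
    have : e * sigma' d < e * (2 * d) := by
      calc e * sigma' d < sigma' (d * e) := by omega
        _ < 2 * (d * e) := hdef
        _ = e * (2 * d) := by ring
    exact Nat.lt_of_mul_lt_mul_left this

lemma aux_sum_bound (p : ℕ → ℕ) (k lo hi : ℕ)
    (hlo : ∀ i < k, lo ≤ p i) (hhi : ∀ i < k, p i ≤ hi)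
    (T : Finset ℕ) (h : ∀ t ∈ T, ∃ i < k, p i ∣ t) (h0 : ∀ t ∈ T, 0 < t) :
    ∃ C, C * lo ≤ ∑ t ∈ T, t ∧ ∑ t ∈ T, t ≤ C * hi := by
  classical
  induction T using Finset.induction with
  | empty => exact ⟨0, by simp⟩
  | @insert a s ha ih =>
    obtain ⟨C, hC1, hC2⟩ := ih (fun t ht => h t (Finset.mem_insert_of_mem ht))
      (fun t ht => h0 t (Finset.mem_insert_of_mem ht))
    obtain ⟨i, hik, hdvd⟩ := h a (Finset.mem_insert_self a s)
    have hap : 0 < a := h0 a (Finset.mem_insert_self a s)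
    set c := a / p i with hc
    have hca : c * p i = a := Nat.div_mul_cancel hdvd
    have hc1 : 1 ≤ c := by
      rcases Nat.eq_zero_or_pos c with h' | h'
      · rw [h', zero_mul] at hca; omega
      · exact h'
    refine ⟨C + c, ?_, ?_⟩
    · rw [Finset.sum_insert ha]
      have : c * lo ≤ a := by
        calc c * lo ≤ c * p i := Nat.mul_le_mul_left c (hlo i hik)
          _ = a := hca
      have := hC1
      nlinarith
    · rw [Finset.sum_insert ha]
      have : a ≤ c * hi := by
        calc a = c * p i := hca.symm
          _ ≤ c * hi := Nat.mul_le_mul_left c (hhi i hik)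
      nlinarith

/-- Theorem 3, part 2.  In the setting of the main theorem, if
`w̃ = m · p 0 ⋯ p (k-1)` is deficient, `q` is a prime with
`p (k-1) < q < 2w̃/d(w̃) − 1`, `Δ(w̃·q) ∈ U`, and `q > Δ(w̃·q)`, then
`w = w̃·q` is a primitive weird number: `w` is weird and no proper divisor
of `w` is weird. -/
theorem primitive_weird_of_deficient_mul_extra_prime (m k : ℕ) (p : ℕ → ℕ) (q wt : ℕ)
    (hm : 1 < m) (hdef : Deficient m) (hk : 1 < k)
    (hprime : ∀ i < k, (p i).Prime)
    (hmono : ∀ i j, i < j → j < k → p i < p j)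
    (hp1 : sigma' m + 1 < p 0)
    (hwt : wt = m * ∏ i ∈ Finset.range k, p i)
    (hwtdef : Deficient wt)
    (hq : q.Prime) (hqgt : p (k - 1) < q)
    (hqlt : (q : ℚ) < 2 * wt / (2 * wt - sigma' wt) - 1)
    (hU : ∃ j ≤ (p 0 - sigma' m) / (p (k - 1) - p 0),
      j * p (k - 1) + sigma' m < sigma' (wt * q) - 2 * (wt * q) ∧
        sigma' (wt * q) - 2 * (wt * q) < (j + 1) * p 0)
    (hqΔ : sigma' (wt * q) - 2 * (wt * q) < q) :
    Weird (wt * q) ∧ ∀ d ∈ (wt * q).properDivisors, ¬ Weird d := by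
  classical
  have hmpos : 0 < m := by omega
  have hppos : ∀ i < k, 0 < p i := fun i hi => (hprime i hi).pos
  have hProdpos : 0 < ∏ i ∈ Finset.range k, p i :=
    Finset.prod_pos fun i hi => hppos i (Finset.mem_range.mp hi)
  have hwtpos : 0 < wt := by rw [hwt]; exact Nat.mul_pos hmpos hProdpos
  have hqpos : 0 < q := hq.pos
  have hple : ∀ i < k, p i ≤ p (k - 1) := by
    intro i hi
    rcases eq_or_lt_of_le (show i ≤ k - 1 by omega) with h' | h'
    · rw [h']
    · exact (hmono i (k - 1) h' (by omega)).le
  have hp0le : ∀ i < k, p 0 ≤ p i := by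
    intro i hi
    rcases Nat.eq_zero_or_pos i with h' | h'
    · rw [h']
    · exact (hmono 0 i h' hi).le
  have hqgt' : ∀ i < k, p i < q := fun i hi => lt_of_le_of_lt (hple i hi) hqgt
  -- m ≤ σ m
  have hsm : m ≤ sigma' m := by
    have : m ∈ m.divisors := Nat.mem_divisors_self m hmpos.ne'
    exact Finset.single_le_sum (fun i _ => Nat.zero_le i) this
  have hmq : m < q := by
    have := hqgt' 0 (by omega)
    omega
  -- q does not divide wt
  have hqwt : ¬ q ∣ wt := by
    rw [hwt]
    intro hdvd
    rcases (Nat.Prime.dvd_mul hq).mp hdvd with h' | h'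
    · exact absurd (Nat.le_of_dvd hmpos h') (by omega)
    · obtain ⟨i, hi, hdi⟩ := hq.prime.exists_mem_finset_dvd h'
      have hik := Finset.mem_range.mp hi
      have : q = p i := (Nat.prime_dvd_prime_iff_eq hq (hprime i hik)).mp hdi
      exact absurd this (by have := hqgt' i hik; omega)
  have hcop : wt.Coprime q := (hq.coprime_iff_not_dvd.mpr hqwt).symm
  have hσmul : sigma' (wt * q) = sigma' wt * (q + 1) := by
    rw [aux_sigma'_mul hcop, aux_sigma'_prime hq]
  -- abundance of wt * q
  have hAlt : sigma' wt < 2 * wt := hwtdef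
  have habund : 2 * (wt * q) < sigma' (wt * q) := by
    have hden : (0 : ℚ) < 2 * (wt : ℚ) - (sigma' wt : ℚ) := by
      have : (sigma' wt : ℚ) < 2 * (wt : ℚ) := by exact_mod_cast hAlt
      linarith
    have h1 : ((q : ℚ) + 1) * (2 * (wt : ℚ) - (sigma' wt : ℚ)) < 2 * (wt : ℚ) := by
      have h2 : (q : ℚ) + 1 < 2 * (wt : ℚ) / (2 * (wt : ℚ) - (sigma' wt : ℚ)) := by
        push_cast at hqlt ⊢
        linarith
      calc ((q : ℚ) + 1) * (2 * (wt : ℚ) - (sigma' wt : ℚ))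
          < (2 * (wt : ℚ) / (2 * (wt : ℚ) - (sigma' wt : ℚ))) * (2 * (wt : ℚ) - (sigma' wt : ℚ)) := by
            exact mul_lt_mul_of_pos_right h2 hden
        _ = 2 * (wt : ℚ) := div_mul_cancel₀ _ hden.ne'
    have h3 : 2 * ((wt : ℚ) * q) < (sigma' wt : ℚ) * ((q : ℚ) + 1) := by nlinarith
    rw [hσmul]
    exact_mod_cast h3
  obtain ⟨j, hj, hΔ1, hΔ2⟩ := hU
  set Δ := sigma' (wt * q) - 2 * (wt * q) with hΔdef
  have hΔeq : sigma' wt * (q + 1) = 2 * (wt * q) + Δ := by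
    rw [hΔdef, ← hσmul]; omega
  constructor
  · constructor
    · exact habund
    · rintro ⟨S, hS, hsum⟩
      set T := (wt * q).properDivisors \ S with hT
      have hTsum : ∑ t ∈ T, t = Δ := by
        have hps : sigma' (wt * q) = ∑ t ∈ (wt * q).properDivisors, t + wt * q :=
          Nat.sum_divisors_eq_sum_properDivisors_add_self.symm ▸
            (Nat.sum_divisors_eq_sum_properDivisors_add_self (n := wt * q)).symm
        have h3 : ∑ t ∈ T, t + ∑ t ∈ S, t = ∑ t ∈ (wt * q).properDivisors, t :=
          Finset.sum_sdiff hS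
        omega
      have hTdvd : ∀ t ∈ T, t ∣ wt := by
        intro t ht
        have htm : t ∈ (wt * q).properDivisors := (Finset.mem_sdiff.mp ht).1
        have htd : t ∣ wt * q := (Nat.mem_properDivisors.mp htm).1
        have htpos : 0 < t := Nat.pos_of_mem_properDivisors htm
        have hle : t ≤ Δ := by
          rw [← hTsum]
          exact Finset.single_le_sum (fun i _ => Nat.zero_le i) ht
        have hqt : ¬ q ∣ t := fun hdvd => absurd (Nat.le_of_dvd htpos hdvd) (by omega)
        exact ((hq.coprime_iff_not_dvd.mpr hqt).symm).dvd_of_dvd_mul_right htd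
      set T1 := T.filter (· ∣ m) with hT1def
      set T2 := T.filter (fun t => ¬ t ∣ m) with hT2def
      have hT12 : ∑ t ∈ T1, t + ∑ t ∈ T2, t = Δ := by
        rw [← hTsum, hT1def, hT2def]
        exact Finset.sum_filter_add_sum_filter_not T _ _
      have hT1le : ∑ t ∈ T1, t ≤ sigma' m := by
        apply Finset.sum_le_sum_of_subset
        intro t ht
        have := Finset.mem_filter.mp ht
        exact Nat.mem_divisors.mpr ⟨this.2, hmpos.ne'⟩
      have hT2p : ∀ t ∈ T2, ∃ i < k, p i ∣ t := by
        intro t ht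
        obtain ⟨htT, htm⟩ := Finset.mem_filter.mp ht
        by_contra hno
        push_neg at hno
        have hcopt : t.Coprime (∏ i ∈ Finset.range k, p i) := by
          apply Nat.Coprime.prod_right
          intro i hi
          exact ((hprime i (Finset.mem_range.mp hi)).coprime_iff_not_dvd.mpr
            (hno i (Finset.mem_range.mp hi))).symm
        exact htm (hcopt.dvd_of_dvd_mul_right (hwt ▸ hTdvd t htT))
      have hT2pos : ∀ t ∈ T2, 0 < t := fun t ht =>
        Nat.pos_of_mem_properDivisors
          (Finset.mem_sdiff.mp (Finset.mem_filter.mp ht).1).1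
      obtain ⟨C, hC1, hC2⟩ := aux_sum_bound p k (p 0) (p (k - 1)) hp0le hple T2 hT2p hT2pos
      rcases le_or_gt C j with h' | h'
      · have : ∑ t ∈ T2, t ≤ j * p (k - 1) :=
          le_trans hC2 (Nat.mul_le_mul_right _ h')
        omega
      · have : (j + 1) * p 0 ≤ C * p 0 := Nat.mul_le_mul_right _ h'
        omega
  · intro d hd
    obtain ⟨hddvd, hdlt⟩ := Nat.mem_properDivisors.mp hd
    have hdpos : 0 < d := Nat.pos_of_mem_properDivisors hd
    by_cases hqd : q ∣ d
    · obtain ⟨d', rfl⟩ := hqd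
      have hd'pos : 0 < d' := by
        rcases Nat.eq_zero_or_pos d' with h' | h'
        · subst h'; simp at hdpos
        · exact h'
      have hd'dvd : d' ∣ wt := by
        rw [mul_comm wt q] at hddvd
        exact (mul_dvd_mul_iff_left (a := q) (by omega : q ≠ 0)).mp hddvd
      have hd'lt : d' < wt := by
        by_contra h'
        push_neg at h'
        have : wt * q ≤ q * d' := by
          calc wt * q = q * wt := mul_comm _ _
            _ ≤ q * d' := Nat.mul_le_mul_left q h'
        omega
      have hqd' : ¬ q ∣ d' := fun h' => hqwt (h'.trans hd'dvd)
      have hcop' : q.Coprime d' := hq.coprime_iff_not_dvd.mpr hqd'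
      set B := sigma' d' with hB
      obtain ⟨e, hwte⟩ : ∃ e, wt = d' * e := hd'dvd
      have he2 : 2 ≤ e := by
        have he0 : e ≠ 0 := by
          intro h'
          rw [h', mul_zero] at hwte
          omega
        have he1 : e ≠ 1 := by
          intro h'
          rw [h', mul_one] at hwte
          omega
        omega
      have hkey : e * B + 1 ≤ sigma' wt := by
        rw [hwte]
        exact aux_key hd'pos he2
      -- show Deficient (q * d')
      have hdef' : Deficient (q * d') := by
        show sigma' (q * d') < 2 * (q * d')
        rw [aux_sigma'_mul hcop', aux_sigma'_prime hq]
        -- goal : (q + 1) * B < 2 * (q * d')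
        have h1 : (e * B + 1) * (q + 1) ≤ sigma' wt * (q + 1) :=
          Nat.mul_le_mul_right _ hkey
        have h2 : sigma' wt * (q + 1) = 2 * (d' * e * q) + Δ := by
          rw [hΔeq, ← hwte]
        have h3 : Δ < q := hqΔ
        have h4 : e * ((q + 1) * B) < e * (2 * (q * d')) := by
          have h5 : e * ((q + 1) * B) + (q + 1) = (e * B + 1) * (q + 1) := by ring
          have h6 : e * (2 * (q * d')) = 2 * (d' * e * q) := by ring
          omega
        exact Nat.lt_of_mul_lt_mul_left h4
      exact fun hw => absurd hw.1 (lt_asymm hdef')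
    · have hddvd' : d ∣ wt :=
        ((hq.coprime_iff_not_dvd.mpr hqd).symm).dvd_of_dvd_mul_right hddvd
      have hdef' : Deficient d := aux_deficient_dvd hwtpos hddvd' hwtdef
      exact fun hw => absurd hw.1 (lt_asymm hdef')
end

section
/- Let m > 1 be a deficient number, k > 1 an integer, and p_1, …, p_k primes with σ(m) + 1 < p_1 < ⋯ < p_k. Let h* = ⌊(p_1 − σ(m))/(p_k − p_1)⌋ and U = ⋃_{j=0}^{h*} { n ∈ ℕ : j·p_k + σ(m) < n < (j+1)·p_1 }. Then no element of U can be expressed as a sum of distinct divisors of w = m·p_1⋯p_k. -/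
/-- In the setting of the main theorem, no element of
`U = ⋃_{j ≤ h*} (j · p (k-1) + σ(m), (j+1) · p 0)` can be expressed as a sum of the
elements of a nonempty set of distinct divisors of `w = m · p 0 ⋯ p (k-1)`. -/
theorem no_elt_of_U_is_sum_of_distinct_divisors (m k : ℕ) (p : ℕ → ℕ) (n : ℕ)
    (hm : 1 < m) (hdef : Deficient m) (hk : 1 < k)
    (hprime : ∀ i < k, (p i).Prime)
    (hmono : ∀ i j, i < j → j < k → p i < p j)
    (hp1 : sigma' m + 1 < p 0)
    (hn : ∃ j ≤ (p 0 - sigma' m) / (p (k - 1) - p 0),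
      j * p (k - 1) + sigma' m < n ∧ n < (j + 1) * p 0) :
    ¬ ∃ S : Finset ℕ, S.Nonempty ∧ S ⊆ (m * ∏ i ∈ Finset.range k, p i).divisors ∧
      ∑ d ∈ S, d = n := by

  rintro ⟨S, -, hSsub, hsum⟩
  obtain ⟨j, -, hn1, hn2⟩ := hn
  have hk1 : k - 1 < k := by omega
  have hple : ∀ i < k, p 0 ≤ p i ∧ p i ≤ p (k - 1) := by
    intro i hi
    constructor
    · rcases Nat.eq_zero_or_pos i with h | h
      · simp [h]
      · exact (hmono 0 i h hi).le
    · rcases eq_or_lt_of_le (Nat.le_sub_one_of_lt hi) with h | h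
      · simp [h]
      · exact (hmono i (k - 1) h hk1).le
  have hw0 : m * ∏ i ∈ Finset.range k, p i ≠ 0 := by
    refine Nat.mul_ne_zero (by omega) (Finset.prod_ne_zero_iff.2 ?_)
    intro i hi
    exact (hprime i (Finset.mem_range.1 hi)).ne_zero
  have hdpos : ∀ d ∈ S, 0 < d := fun d hd =>
    Nat.pos_of_mem_divisors (hSsub hd)
  -- every element of S not dividing m is divisible by some p i
  have hex : ∀ d ∈ S.filter (fun d => ¬ d ∣ m), ∃ c, p 0 * c ≤ d ∧ d ≤ p (k - 1) * c := by
    intro d hd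
    rw [Finset.mem_filter] at hd
    obtain ⟨hdS, hdm⟩ := hd
    have hdw : d ∣ m * ∏ i ∈ Finset.range k, p i := Nat.dvd_of_mem_divisors (hSsub hdS)
    have : ∃ i < k, p i ∣ d := by
      by_contra h
      push_neg at h
      have hcop : Nat.Coprime d (∏ i ∈ Finset.range k, p i) := by
        refine Nat.Coprime.prod_right fun i hi => ?_
        have hi' := Finset.mem_range.1 hi
        exact ((Nat.Prime.coprime_iff_not_dvd (hprime i hi')).2 (h i hi')).symm
      exact hdm (hcop.dvd_of_dvd_mul_right hdw)
    obtain ⟨i, hi, hpi⟩ := this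
    refine ⟨d / p i, ?_, ?_⟩
    · calc p 0 * (d / p i) ≤ p i * (d / p i) :=
            Nat.mul_le_mul_right _ (hple i hi).1
        _ = d := Nat.mul_div_cancel' hpi
    · calc d = p i * (d / p i) := (Nat.mul_div_cancel' hpi).symm
        _ ≤ p (k - 1) * (d / p i) := Nat.mul_le_mul_right _ (hple i hi).2
  choose! c hc1 hc2 using hex
  set S2 := S.filter (fun d => ¬ d ∣ m) with hS2
  set C := ∑ d ∈ S2, c d with hC
  have h1 : p 0 * C ≤ ∑ d ∈ S2, d := by
    rw [hC, Finset.mul_sum]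
    exact Finset.sum_le_sum hc1
  have h2 : ∑ d ∈ S2, d ≤ p (k - 1) * C := by
    rw [hC, Finset.mul_sum]
    exact Finset.sum_le_sum hc2
  have h3 : ∑ d ∈ S.filter (fun d => d ∣ m), d ≤ sigma' m := by
    refine Finset.sum_le_sum_of_subset ?_
    intro d hd
    rw [Finset.mem_filter] at hd
    exact Nat.mem_divisors.2 ⟨hd.2, by omega⟩
  have hsplit : ∑ d ∈ S.filter (fun d => d ∣ m), d + ∑ d ∈ S2, d = n := by
    rw [hS2, Finset.sum_filter_add_sum_filter_not, hsum]
  have hpk1 : 0 < p (k - 1) := (hprime _ hk1).pos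
  have hjC : j < C := by
    have : j * p (k - 1) < p (k - 1) * C := by omega
    have := this.trans_le (le_of_eq (Nat.mul_comm _ _))
    exact lt_of_mul_lt_mul_right this (Nat.zero_le _)
  have : (j + 1) * p 0 ≤ p 0 * C := by
    rw [Nat.mul_comm]
    exact Nat.mul_le_mul_left _ hjC
  omega
end

section
/- Let m be a deficient number with deficience d = 2m − σ(m), and let p_1, …, p_k be primes with m < p_1 < p_2 < ⋯ < p_k. If p_k < 2km/d − (k+2)/2, then m·p_1⋯p_k is abundant. -/
lemma sigma'_eq (n : ℕ) : sigma' n = ArithmeticFunction.sigma 1 n := by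
  rw [ArithmeticFunction.sigma_one_apply]; rfl

lemma one_add_sum_le_prod' (s : Finset ℕ) (f : ℕ → ℚ) (hf : ∀ i ∈ s, 0 ≤ f i) :
    1 + ∑ i ∈ s, f i ≤ ∏ i ∈ s, (1 + f i) := by
  classical
  induction s using Finset.cons_induction with
  | empty => simp
  | cons a s ha ih =>
    rw [Finset.prod_cons, Finset.sum_cons]
    have hs : ∀ i ∈ s, 0 ≤ f i := fun i hi => hf i (Finset.mem_cons_of_mem hi)
    have h1 : (0:ℚ) ≤ ∑ i ∈ s, f i := Finset.sum_nonneg hs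
    have ha' : 0 ≤ f a := hf a (Finset.mem_cons_self a s)
    nlinarith [ih hs]

lemma amhm (s : Finset ℕ) (f : ℕ → ℚ) (hf : ∀ i ∈ s, 0 < f i) :
    ((s.card : ℚ))^2 ≤ (∑ i ∈ s, f i) * (∑ i ∈ s, 1 / f i) := by
  classical
  rw [Finset.sum_mul_sum]
  have key : ∀ i ∈ s, ∀ j ∈ s, (2:ℚ) ≤ f i * (1 / f j) + f j * (1 / f i) := by
    intro i hi j hj
    have hi' := hf i hi; have hj' := hf j hj
    rw [mul_one_div, mul_one_div, div_add_div _ _ (ne_of_gt hj') (ne_of_gt hi'),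
      le_div_iff₀ (by positivity)]
    nlinarith [sq_nonneg (f i - f j)]
  have h2 : ((s.card : ℚ))^2 * 2 ≤ (∑ i ∈ s, ∑ j ∈ s, f i * (1/f j)) * 2 := by
    have swap : (∑ i ∈ s, ∑ j ∈ s, f i * (1/f j)) = ∑ i ∈ s, ∑ j ∈ s, f j * (1/f i) :=
      Finset.sum_comm
    calc ((s.card:ℚ))^2 * 2 = ∑ i ∈ s, ∑ j ∈ s, (2:ℚ) := by
          simp [Finset.sum_const]; ring
      _ ≤ ∑ i ∈ s, ∑ j ∈ s, (f i * (1/f j) + f j * (1/f i)) := by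
          apply Finset.sum_le_sum; intro i hi; apply Finset.sum_le_sum; intro j hj
          exact key i hi j hj
      _ = (∑ i ∈ s, ∑ j ∈ s, f i * (1/f j)) * 2 := by
          simp only [Finset.sum_add_distrib, ← swap]; ring
  have h3 := h2
  convert (by linarith : ((s.card : ℚ))^2 ≤ ∑ i ∈ s, ∑ j ∈ s, f i * (1/f j)) using 2

/-- Theorem 5(i).  If `m` is deficient with deficience `d = 2m − σ(m)`, and
`p 0 < p 1 < ⋯ < p (k-1)` are primes with `m < p 0` and
`p (k-1) < 2km/d − (k+2)/2`, then `m · p 0 ⋯ p (k-1)` is abundant. -/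
theorem abundant_of_primes_small (m k : ℕ) (p : ℕ → ℕ)
    (hm : Deficient m) (hk : 0 < k)
    (hprime : ∀ i < k, (p i).Prime)
    (hmp : m < p 0)
    (hmono : ∀ i j, i < j → j < k → p i < p j)
    (hpk : (p (k - 1) : ℚ) <
      2 * k * m / (2 * m - sigma' m) - (k + 2) / 2) :
    Abundant (m * ∏ i ∈ Finset.range k, p i) := by
  classical
  have hm1 : 1 ≤ m := by
    rcases Nat.eq_zero_or_pos m with h | h
    · simp [Deficient, h, sigma'] at hm
    · exact h
  -- basic facts about the primes
  have hstep : ∀ n i, i + n < k → p i + n ≤ p (i + n) := by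
    intro n
    induction n with
    | zero => intro i _; simp
    | succ n ih =>
      intro i h
      have h2 := hmono (i+n) (i+n+1) (by omega) (by omega)
      have h3 := ih i (by omega)
      have h4 : i + (n+1) = i + n + 1 := by omega
      rw [h4]
      omega
  have hple : ∀ i j, i ≤ j → j < k → p i + (j - i) ≤ p j := by
    intro i j hij hjk
    have h := hstep (j - i) i (by omega)
    have he : i + (j - i) = j := by omega
    rwa [he] at h
  -- sigma' m ≥ 1
  have hs1 : 1 ≤ sigma' m :=
    le_trans hm1 (Finset.single_le_sum (f := fun d => d)
      (fun i _ => Nat.zero_le i) (Nat.mem_divisors_self m (by omega)))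
  -- multiplicativity
  have hcop : ∀ i < k, Nat.Coprime (p i) m := by
    intro i hi
    refine ((hprime i hi).coprime_iff_not_dvd).mpr fun hdvd => ?_
    have h1 : p i ≤ m := Nat.le_of_dvd (by omega) hdvd
    have h2 : p 0 ≤ p i := by
      rcases Nat.eq_zero_or_pos i with h | h
      · subst h; exact le_refl _
      · exact le_of_lt (hmono 0 i h hi)
    omega
  have hmult : sigma' (m * ∏ i ∈ Finset.range k, p i)
      = sigma' m * ∏ i ∈ Finset.range k, (p i + 1) := by
    rw [sigma'_eq, ArithmeticFunction.IsMultiplicative.map_mul_of_coprime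
      ArithmeticFunction.isMultiplicative_sigma
      (Nat.Coprime.prod_right fun i hi =>
        (hcop i (Finset.mem_range.mp hi)).symm),
      ArithmeticFunction.IsMultiplicative.map_prod _
      ArithmeticFunction.isMultiplicative_sigma]
    · rw [← sigma'_eq]
      congr 1
      refine Finset.prod_congr rfl fun i hi => ?_
      rw [← sigma'_eq, sigma'_prime (hprime i (Finset.mem_range.mp hi))]
    · intro i hi j hj hij
      have hik := Finset.mem_coe.mp hi
      have hjk := Finset.mem_coe.mp hj
      simp only [Finset.mem_range] at hik hjk
      have : p i ≠ p j := by
        rcases lt_or_gt_of_ne hij with h | h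
        · exact Nat.ne_of_lt (hmono i j h hjk)
        · exact (Nat.ne_of_lt (hmono j i h hik)).symm
      exact (Nat.coprime_primes (hprime i hik) (hprime j hjk)).mpr this
  rw [Abundant, hmult]
  -- move to ℚ
  rw [← Nat.cast_lt (α := ℚ)]
  push_cast
  rw [← mul_assoc]
  have hMpos : (0:ℚ) < (m:ℚ) := by exact_mod_cast hm1
  have hspos : (0:ℚ) < (sigma' m : ℚ) := by exact_mod_cast hs1
  have hKpos : (0:ℚ) < (k:ℚ) := by exact_mod_cast hk
  have hd : (0:ℚ) < 2*(m:ℚ) - (sigma' m : ℚ) := by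
    have : (sigma' m : ℚ) < 2*(m:ℚ) := by exact_mod_cast hm
    linarith
  rw [lt_sub_iff_add_lt, lt_div_iff₀ hd] at hpk
  set M : ℚ := (m : ℚ) with hM
  set s : ℚ := (sigma' m : ℚ) with hs
  set K : ℚ := (k : ℚ) with hK
  set P : ℚ := (p (k-1) : ℚ) with hP
  set d : ℚ := 2*M - s with hdd
  -- p i positive and ≤ P - (K-1) + i
  have hppos : ∀ i ∈ Finset.range k, (0:ℚ) < (p i : ℚ) := fun i hi => by
    exact_mod_cast (hprime i (Finset.mem_range.mp hi)).pos
  have hpub : ∀ i ∈ Finset.range k, (p i : ℚ) ≤ P - (K - 1) + i := by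
    intro i hi
    have hik := Finset.mem_range.mp hi
    have h := hple i (k-1) (by omega) (by omega)
    have hc2 : (((k-1) - i : ℕ) : ℚ) = (K - 1) - i := by
      rw [Nat.cast_sub (by omega), Nat.cast_sub hk, hK]
      push_cast; ring
    have h' : ((p i : ℚ)) + (((k-1) - i : ℕ) : ℚ) ≤ P := by
      rw [hP]; exact_mod_cast h
    rw [hc2] at h'
    linarith
  -- sum bounds
  set T : ℚ := ∑ i ∈ Finset.range k, (p i : ℚ) with hT
  set S : ℚ := ∑ i ∈ Finset.range k, 1 / (p i : ℚ) with hS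
  have hTpos : 0 < T :=
    Finset.sum_pos hppos ⟨0, Finset.mem_range.mpr hk⟩
  have hgauss : ∑ i ∈ Finset.range k, (i:ℚ) = K * (K-1) / 2 := by
    have h := Finset.sum_range_id_mul_two k
    have h2 : ((∑ i ∈ Finset.range k, i : ℕ) : ℚ) * 2 = K * (K - 1) := by
      rw_mod_cast [h]
      rw [Nat.cast_mul, Nat.cast_sub hk, hK]
      push_cast; ring
    push_cast at h2 ⊢
    linarith
  have hTub : T ≤ K * P - K*(K-1)/2 := by
    calc T ≤ ∑ i ∈ Finset.range k, (P - (K-1) + (i:ℚ)) := Finset.sum_le_sum hpub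
      _ = K * P - K*(K-1)/2 := by
          rw [Finset.sum_add_distrib, Finset.sum_const, Finset.card_range, hgauss,
            nsmul_eq_mul]
          rw [← hK]; ring
  have hamhm : K^2 ≤ T * S := by
    have h := amhm (Finset.range k) (fun i => (p i : ℚ)) hppos
    rwa [Finset.card_range] at h
  -- key: d < s * S
  have hkey : d < s * S := by
    have h4 : d * (P - (K-1)/2) < s * K := by
      have h2M : 2 * M = s + d := by rw [hdd]; ring
      nlinarith [hpk, hd]
    have h5 : d * T < s * K^2 := by
      have hdT : d * T ≤ d * (K * (P - (K-1)/2)) := by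
        have he : K * (P - (K-1)/2) = K*P - K*(K-1)/2 := by ring
        rw [he]
        exact mul_le_mul_of_nonneg_left hTub (le_of_lt hd)
      calc d * T ≤ d * (K * (P - (K-1)/2)) := hdT
        _ = K * (d * (P - (K-1)/2)) := by ring
        _ < K * (s * K) := mul_lt_mul_of_pos_left h4 hKpos
        _ = s * K^2 := by ring
    have h6 : d < s * K^2 / T := by
      rw [lt_div_iff₀ hTpos]; linarith
    have h7 : s * K^2 / T ≤ s * S := by
      rw [div_le_iff₀ hTpos]
      nlinarith [hamhm, hspos]
    linarith
  -- finish
  have hprod1 : ∀ i ∈ Finset.range k, ((p i : ℚ) + 1) = (p i : ℚ) * (1 + 1/(p i : ℚ)) := by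
    intro i hi
    have h := (hppos i hi).ne'
    field_simp
  have hprodpos : 0 < ∏ i ∈ Finset.range k, (p i : ℚ) :=
    Finset.prod_pos hppos
  have hsplit : ∏ i ∈ Finset.range k, ((p i : ℚ) + 1)
      = (∏ i ∈ Finset.range k, (p i : ℚ)) * ∏ i ∈ Finset.range k, (1 + 1/(p i : ℚ)) := by
    rw [Finset.prod_congr rfl hprod1, Finset.prod_mul_distrib]
  have h1S : 1 + S ≤ ∏ i ∈ Finset.range k, (1 + 1/(p i : ℚ)) :=
    one_add_sum_le_prod' _ _ (fun i hi => by positivity)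
  have hfinal : 2 * M < s * (1 + S) := by
    have he : s * (1 + S) = s + s * S := by ring
    rw [he]
    have h2M : 2 * M = s + d := by rw [hdd]; ring
    linarith
  calc 2 * M * ∏ i ∈ Finset.range k, (p i : ℚ)
      < s * (1 + S) * ∏ i ∈ Finset.range k, (p i : ℚ) :=
        mul_lt_mul_of_pos_right hfinal hprodpos
    _ ≤ s * (∏ i ∈ Finset.range k, (1 + 1/(p i : ℚ))) * ∏ i ∈ Finset.range k, (p i : ℚ) := by
        have h := mul_le_mul_of_nonneg_left h1S (le_of_lt hspos)
        exact mul_le_mul_of_nonneg_right h (le_of_lt hprodpos)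
    _ = s * ∏ i ∈ Finset.range k, ((p i : ℚ) + 1) := by rw [hsplit]; ring
end

section
/- Let m > 1 be a deficient number, k ≥ 3 an integer, and p_1, …, p_k primes with σ(m) + 1 < p_1 < ⋯ < p_k. Then h* = ⌊(p_1 − σ(m))/(p_k − p_1)⌋ satisfies h* < p_1/(2k). -/
/-- In the setting of the main theorem with `k ≥ 3`, the quantity
`h* = ⌊(p 0 − σ(m)) / (p (k-1) − p 0)⌋` satisfies `h* < p 0 / (2k)`. -/
theorem hstar_lt (m k : ℕ) (p : ℕ → ℕ)
    (hm : 1 < m) (hdef : Deficient m) (hk : 3 ≤ k)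
    (hprime : ∀ i < k, (p i).Prime)
    (hmono : ∀ i j, i < j → j < k → p i < p j)
    (hp1 : sigma' m + 1 < p 0) :
    (((p 0 - sigma' m) / (p (k - 1) - p 0) : ℕ) : ℚ) < (p 0 : ℚ) / (2 * k) := by
  -- σ(m) ≥ m ≥ 2
  have hσ : 2 ≤ sigma' m := by
    have hmem : m ∈ m.divisors := Nat.mem_divisors_self m (by omega)
    have h : m ≤ sigma' m :=
      Finset.single_le_sum (f := fun d => d) (fun i _ => Nat.zero_le i) hmem
    omega
  have hp0 : 4 ≤ p 0 := by omega
  -- every p i (i < k) is ≥ p 0, hence ≥ 4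
  have hge : ∀ i < k, 4 ≤ p i := by
    intro i hi
    rcases Nat.eq_zero_or_pos i with h | h
    · subst h; exact hp0
    · have := hmono 0 i h hi; omega
  have hodd : ∀ i < k, Odd (p i) := by
    intro i hi
    exact (hprime i hi).odd_of_ne_two (by have := hge i hi; omega)
  -- gaps between consecutive primes are ≥ 2
  have hstep : ∀ i, i + 1 < k → p i + 2 ≤ p (i + 1) := by
    intro i hi
    obtain ⟨a, ha⟩ := hodd i (by omega)
    obtain ⟨b, hb⟩ := hodd (i + 1) hi
    have := hmono i (i + 1) (by omega) hi
    omega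
  -- not divisible by 3
  have h3 : ∀ i < k, ¬ (3 ∣ p i) := by
    intro i hi hdvd
    have := (Nat.prime_dvd_prime_iff_eq (by norm_num) (hprime i hi)).mp hdvd
    have := hge i hi
    omega
  -- p 2 ≥ p 0 + 6
  have hp2 : p 0 + 6 ≤ p 2 := by
    have h01 : p 0 + 2 ≤ p 1 := hstep 0 (by omega)
    have h12 : p 1 + 2 ≤ p 2 := hstep 1 (by omega)
    by_contra h
    obtain ⟨a0, ha0⟩ := hodd 0 (by omega)
    obtain ⟨a1, ha1⟩ := hodd 1 (by omega)
    obtain ⟨a2, ha2⟩ := hodd 2 (by omega)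
    have e1 : p 1 = p 0 + 2 := by omega
    have e2 : p 2 = p 0 + 4 := by omega
    rcases (by omega : p 0 % 3 = 0 ∨ p 0 % 3 = 1 ∨ p 0 % 3 = 2) with h0 | h0 | h0
    · exact h3 0 (by omega) (Nat.dvd_of_mod_eq_zero h0)
    · exact h3 1 (by omega) (Nat.dvd_of_mod_eq_zero (by omega))
    · exact h3 2 (by omega) (Nat.dvd_of_mod_eq_zero (by omega))
  -- p j ≥ p 2 + 2*(j-2) for 2 ≤ j < k
  have hind : ∀ j, 2 ≤ j → j < k → p 2 + 2 * (j - 2) ≤ p j := by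
    intro j
    induction j with
    | zero => omega
    | succ n ih =>
      intro h2 hn
      rcases Nat.lt_or_ge n 2 with h | h
      · have hn1 : n = 1 := by omega
        subst hn1
        have : p 1 + 2 ≤ p 2 := hstep 1 (by omega)
        show p 2 + 2 * (2 - 2) ≤ p 2
        omega
      · have h1 := ih h (by omega)
        have h2 : p n + 2 ≤ p (n + 1) := hstep n hn
        omega
  have hlast : p 0 + 2 * k ≤ p (k - 1) := by
    have := hind (k - 1) (by omega) (by omega)
    omega
  -- the natural-number quotient bound
  have hdivle : (p 0 - sigma' m) / (p (k - 1) - p 0) ≤ (p 0 - sigma' m) / (2 * k) :=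
    Nat.div_le_div_left (by omega) (by omega)
  calc (((p 0 - sigma' m) / (p (k - 1) - p 0) : ℕ) : ℚ)
      ≤ (((p 0 - sigma' m) / (2 * k) : ℕ) : ℚ) := by exact_mod_cast hdivle
    _ ≤ ((p 0 - sigma' m : ℕ) : ℚ) / ((2 * k : ℕ) : ℚ) := Nat.cast_div_le
    _ < (p 0 : ℚ) / (2 * k) := by
        rw [Nat.cast_sub (by omega)]
        push_cast
        have h2k : (0:ℚ) < 2 * (k:ℚ) := by
          have : (0:ℚ) < (k:ℚ) := by exact_mod_cast (by omega : 0 < k)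
          linarith
        rw [div_lt_div_iff₀ h2k h2k]
        have hσq : (2:ℚ) ≤ (sigma' m : ℚ) := by exact_mod_cast hσ
        nlinarith
end

section
/- The number 44257207676 = 2²·11·37·59·523·881 is a primitive weird number with six distinct prime factors, i.e., it is weird, none of its proper divisors is weird, and it has exactly six distinct prime factors. -/
lemma sigma'_mul {m n : ℕ} (h : Nat.Coprime m n) :
    sigma' (m * n) = sigma' m * sigma' n :=
  Nat.Coprime.sum_divisors_mul h

/-- If `d ∣ m` then `σ(d) * (m / d) ≤ σ(m)`. -/
lemma sigma'_dvd_mul_le {d m : ℕ} (hm : 0 < m) (h : d ∣ m) :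
    sigma' d * (m / d) ≤ sigma' m := by
  obtain ⟨c, rfl⟩ := h
  have hd : 0 < d := Nat.pos_of_ne_zero (by rintro rfl; simp at hm)
  have hc : 0 < c := Nat.pos_of_ne_zero (by rintro rfl; simp at hm)
  rw [Nat.mul_div_cancel_left _ hd]
  have h1 : ∑ x ∈ d.divisors.image (· * c), x = sigma' d * c := by
    rw [Finset.sum_image (fun x _ y _ hxy => Nat.eq_of_mul_eq_mul_right hc hxy),
      sigma', ← Finset.sum_mul]
  have h2 : ∑ x ∈ d.divisors.image (· * c), x ≤ sigma' (d * c) := by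
    apply Finset.sum_le_sum_of_subset
    intro x hx
    obtain ⟨y, hy, rfl⟩ := Finset.mem_image.mp hx
    exact Nat.mem_divisors.mpr
      ⟨mul_dvd_mul (Nat.mem_divisors.mp hy).1 dvd_rfl, hm.ne'⟩
  omega

/-- A divisor of a deficient number is deficient. -/
lemma Deficient.of_dvd_s17 {d m : ℕ} (hm : 0 < m) (hdef : Deficient m) (h : d ∣ m) :
    Deficient d := by
  have hle := sigma'_dvd_mul_le hm h
  have hd : 0 < d := Nat.pos_of_dvd_of_pos h hm
  have hq : 0 < m / d := Nat.div_pos (Nat.le_of_dvd hm h) hd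
  have hmd : d * (m / d) = m := Nat.mul_div_cancel' h
  have : sigma' d * (m / d) < (2 * d) * (m / d) := by
    calc sigma' d * (m / d) ≤ sigma' m := hle
      _ < 2 * m := hdef
      _ = (2 * d) * (m / d) := by rw [mul_assoc, hmd]
  exact Nat.lt_of_mul_lt_mul_right this

lemma sigma'_4 : sigma' 4 = 7 := by decide
lemma sigma'_2 : sigma' 2 = 3 := by decide
lemma sigma'_11 : sigma' 11 = 12 := by decide
lemma sigma'_37 : sigma' 37 = 38 := by decide
lemma sigma'_59 : sigma' 59 = 60 := by decide
set_option maxRecDepth 4000 in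
lemma sigma'_523 : sigma' 523 = 524 := by decide
set_option maxRecDepth 8000 in
lemma sigma'_881 : sigma' 881 = 882 := by decide

lemma sigma'_n : sigma' 44257207676 = 88514415360 := by
  rw [show (44257207676 : ℕ) = 4 * 11 * 37 * 59 * 523 * 881 by norm_num,
    sigma'_mul (by norm_num), sigma'_mul (by norm_num), sigma'_mul (by norm_num),
    sigma'_mul (by norm_num), sigma'_mul (by norm_num),
    sigma'_4, sigma'_11, sigma'_37, sigma'_59, sigma'_523, sigma'_881]

lemma def_n2 : Deficient 22128603838 := by
  unfold Deficient
  rw [show (22128603838 : ℕ) = 2 * 11 * 37 * 59 * 523 * 881 by norm_num,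
    sigma'_mul (by norm_num), sigma'_mul (by norm_num), sigma'_mul (by norm_num),
    sigma'_mul (by norm_num), sigma'_mul (by norm_num),
    sigma'_2, sigma'_11, sigma'_37, sigma'_59, sigma'_523, sigma'_881]
  norm_num

lemma def_n11 : Deficient 4023382516 := by
  unfold Deficient
  rw [show (4023382516 : ℕ) = 4 * 37 * 59 * 523 * 881 by norm_num,
    sigma'_mul (by norm_num), sigma'_mul (by norm_num), sigma'_mul (by norm_num),
    sigma'_mul (by norm_num),
    sigma'_4, sigma'_37, sigma'_59, sigma'_523, sigma'_881]
  norm_num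

lemma def_n37 : Deficient 1196140748 := by
  unfold Deficient
  rw [show (1196140748 : ℕ) = 4 * 11 * 59 * 523 * 881 by norm_num,
    sigma'_mul (by norm_num), sigma'_mul (by norm_num), sigma'_mul (by norm_num),
    sigma'_mul (by norm_num),
    sigma'_4, sigma'_11, sigma'_59, sigma'_523, sigma'_881]
  norm_num

lemma def_n59 : Deficient 750122164 := by
  unfold Deficient
  rw [show (750122164 : ℕ) = 4 * 11 * 37 * 523 * 881 by norm_num,
    sigma'_mul (by norm_num), sigma'_mul (by norm_num), sigma'_mul (by norm_num),
    sigma'_mul (by norm_num),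
    sigma'_4, sigma'_11, sigma'_37, sigma'_523, sigma'_881]
  norm_num

lemma def_n523 : Deficient 84621812 := by
  unfold Deficient
  rw [show (84621812 : ℕ) = 4 * 11 * 37 * 59 * 881 by norm_num,
    sigma'_mul (by norm_num), sigma'_mul (by norm_num), sigma'_mul (by norm_num),
    sigma'_mul (by norm_num),
    sigma'_4, sigma'_11, sigma'_37, sigma'_59, sigma'_881]
  norm_num

lemma def_n881 : Deficient 50235196 := by
  unfold Deficient
  rw [show (50235196 : ℕ) = 4 * 11 * 37 * 59 * 523 by norm_num,
    sigma'_mul (by norm_num), sigma'_mul (by norm_num), sigma'_mul (by norm_num),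
    sigma'_mul (by norm_num),
    sigma'_4, sigma'_11, sigma'_37, sigma'_59, sigma'_523]
  norm_num

/-- `44257207676` is not semiperfect. -/
lemma not_semiperfect_n : ¬ Semiperfect 44257207676 := by
  rintro ⟨S, hS, hsum⟩
  have hP : ∑ d ∈ (44257207676 : ℕ).properDivisors, d = 44257207684 := by
    have h1 := Nat.sum_divisors_eq_sum_properDivisors_add_self (n := 44257207676)
    have h2 : sigma' 44257207676 = 88514415360 := sigma'_n
    unfold sigma' at h2
    omega
  have hT : ∑ d ∈ (44257207676 : ℕ).properDivisors \ S, d = 8 := by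
    have h := Finset.sum_sdiff (f := fun d => d) hS
    omega
  have hsub : (44257207676 : ℕ).properDivisors \ S ⊆ ({1, 2, 4} : Finset ℕ) := by
    intro t ht
    have htm := (Finset.mem_sdiff.mp ht).1
    have h1 := Nat.mem_properDivisors.mp htm
    have hle : t ≤ 8 := by
      have h := Finset.single_le_sum (f := fun d => d)
        (fun _ _ => Nat.zero_le _) ht
      omega
    interval_cases t <;> revert h1 <;> decide
  have h := Finset.sum_le_sum_of_subset (f := fun d => d) hsub
  have h7 : ∑ d ∈ ({1, 2, 4} : Finset ℕ), d = 7 := by decide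
  omega

/-- `44257207676 = 2²·11·37·59·523·881` is a primitive weird number with six
distinct prime factors: it is weird, none of its proper divisors is weird, and it
has exactly six distinct prime factors. -/
theorem primitive_weird_44257207676 :
    (44257207676 : ℕ) = 2 ^ 2 * 11 * 37 * 59 * 523 * 881 ∧
    Weird 44257207676 ∧
    (∀ d ∈ (44257207676 : ℕ).properDivisors, ¬ Weird d) ∧
    (44257207676 : ℕ).primeFactors.card = 6 := by
  refine ⟨by norm_num, ⟨?_, not_semiperfect_n⟩, ?_, ?_⟩
  · unfold Abundant
    rw [sigma'_n]
    norm_num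
  · intro d hd hw
    obtain ⟨hdvd, hlt⟩ := Nat.mem_properDivisors.mp hd
    have hd0 : 0 < d := Nat.pos_of_dvd_of_pos hdvd (by norm_num)
    -- d is a proper divisor, so some prime p divides n / d
    obtain ⟨q, hmul⟩ := hdvd
    have hq2 : 2 ≤ q := by
      rcases Nat.lt_or_ge q 2 with h | h
      · interval_cases q <;> omega
      · exact h
    set p : ℕ := q.minFac with hp
    have hpp : p.Prime := Nat.minFac_prime (by omega)
    have hpq : p ∣ q := Nat.minFac_dvd q
    have hqn : q ∣ 44257207676 := Dvd.intro_left d hmul.symm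
    have hdvd : d ∣ 44257207676 := Dvd.intro q hmul.symm
    have hpn : p ∣ 44257207676 := hpq.trans hqn
    have hdp : d ∣ 44257207676 / p := by
      rw [Nat.dvd_div_iff_mul_dvd hpn, mul_comm]
      calc d * p ∣ d * q := mul_dvd_mul_left d hpq
        _ = 44257207676 := hmul.symm
    -- enumerate possible primes p
    have hpcases : p = 2 ∨ p = 11 ∨ p = 37 ∨ p = 59 ∨ p = 523 ∨ p = 881 := by
      have h0 : p ∣ 4 * 11 * 37 * 59 * 523 * 881 := by
        rwa [show (4 : ℕ) * 11 * 37 * 59 * 523 * 881 = 44257207676 by norm_num]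
      rcases (Nat.Prime.dvd_mul hpp).mp h0 with h1 | h1
      · rcases (Nat.Prime.dvd_mul hpp).mp h1 with h2 | h2
        · rcases (Nat.Prime.dvd_mul hpp).mp h2 with h3 | h3
          · rcases (Nat.Prime.dvd_mul hpp).mp h3 with h4 | h4
            · rcases (Nat.Prime.dvd_mul hpp).mp h4 with h5 | h5
              · left
                have h6 : p ∣ 2 := by
                  rcases (Nat.Prime.dvd_mul hpp).mp
                    (by rwa [show (4:ℕ) = 2 * 2 by norm_num] at h5) with h | h <;>
                    exact h
                exact (Nat.prime_dvd_prime_iff_eq hpp Nat.prime_two).mp h6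
              · exact Or.inr (Or.inl ((Nat.prime_dvd_prime_iff_eq hpp
                  (by norm_num)).mp h5))
            · exact Or.inr (Or.inr (Or.inl ((Nat.prime_dvd_prime_iff_eq hpp
                (by norm_num)).mp h4)))
          · exact Or.inr (Or.inr (Or.inr (Or.inl ((Nat.prime_dvd_prime_iff_eq hpp
              (by norm_num)).mp h3))))
        · exact Or.inr (Or.inr (Or.inr (Or.inr (Or.inl
            ((Nat.prime_dvd_prime_iff_eq hpp (by norm_num)).mp h2)))))
      · exact Or.inr (Or.inr (Or.inr (Or.inr (Or.inr
          ((Nat.prime_dvd_prime_iff_eq hpp (by norm_num)).mp h1)))))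
    have hdef : Deficient d := by
      rcases hpcases with h | h | h | h | h | h <;> rw [h] at hdp
      · exact Deficient.of_dvd_s17 (by norm_num) def_n2
          (by rwa [show (44257207676 : ℕ) / 2 = 22128603838 by norm_num] at hdp)
      · exact Deficient.of_dvd_s17 (by norm_num) def_n11
          (by rwa [show (44257207676 : ℕ) / 11 = 4023382516 by norm_num] at hdp)
      · exact Deficient.of_dvd_s17 (by norm_num) def_n37
          (by rwa [show (44257207676 : ℕ) / 37 = 1196140748 by norm_num] at hdp)
      · exact Deficient.of_dvd_s17 (by norm_num) def_n59
          (by rwa [show (44257207676 : ℕ) / 59 = 750122164 by norm_num] at hdp)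
      · exact Deficient.of_dvd_s17 (by norm_num) def_n523
          (by rwa [show (44257207676 : ℕ) / 523 = 84621812 by norm_num] at hdp)
      · exact Deficient.of_dvd_s17 (by norm_num) def_n881
          (by rwa [show (44257207676 : ℕ) / 881 = 50235196 by norm_num] at hdp)
    have hab : Abundant d := hw.1
    unfold Abundant at hab
    unfold Deficient at hdef
    omega
  · rw [show (44257207676 : ℕ) = 2 ^ 2 * 11 * 37 * 59 * 523 * 881 by norm_num,
      Nat.primeFactors_mul (by norm_num) (by norm_num),
      Nat.primeFactors_mul (by norm_num) (by norm_num),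
      Nat.primeFactors_mul (by norm_num) (by norm_num),
      Nat.primeFactors_mul (by norm_num) (by norm_num),
      Nat.primeFactors_mul (by norm_num) (by norm_num),
      Nat.primeFactors_pow 2 (by norm_num),
      Nat.Prime.primeFactors Nat.prime_two,
      Nat.Prime.primeFactors (by norm_num : Nat.Prime 11),
      Nat.Prime.primeFactors (by norm_num : Nat.Prime 37),
      Nat.Prime.primeFactors (by norm_num : Nat.Prime 59),
      Nat.Prime.primeFactors (by norm_num : Nat.Prime 523),
      Nat.Prime.primeFactors (by norm_num : Nat.Prime 881)]
    decide
end

section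
/- The number 9210347984 = 2⁴·83·89·149·523 is a primitive weird number with five distinct prime factors, i.e., it is weird, none of its proper divisors is weird, and it has exactly five distinct prime factors. -/
open Finset

lemma sigma'_mul_of_coprime {m n : ℕ} (h : m.Coprime n) :
    sigma' (m * n) = sigma' m * sigma' n :=
  h.sum_divisors_mul

lemma sigma'_prime_s18 {p : ℕ} (hp : p.Prime) : sigma' p = p + 1 := by
  rw [sigma', hp.sum_divisors, add_comm]

lemma sigma'_two_pow (k : ℕ) : sigma' (2 ^ k) = 2 ^ (k + 1) - 1 := by
  rw [sigma', Nat.sum_divisors_prime_pow Nat.prime_two, Nat.geomSum_eq le_rfl, Nat.div_one]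

lemma mul_sigma'_add_one_le_sigma'_mul {d c : ℕ} (hd : 0 < d) (hc : 2 ≤ c) :
    sigma' d * c + 1 ≤ sigma' (d * c) := by
  have hinj : Set.InjOn (· * c) d.divisors := fun a _ b _ h =>
    Nat.eq_of_mul_eq_mul_right (by omega) h
  have hone : 1 ∉ d.divisors.image (· * c) := by
    simp only [mem_image, not_exists, not_and]
    intro e he h
    have := Nat.pos_of_mem_divisors he
    nlinarith
  have hsub : insert 1 (d.divisors.image (· * c)) ⊆ (d * c).divisors := by
    have hdc : d * c ≠ 0 := by positivity
    simp only [insert_subset_iff, image_subset_iff, Nat.mem_divisors]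
    exact ⟨⟨one_dvd _, hdc⟩, fun e he => ⟨mul_dvd_mul_right he.1 c, hdc⟩⟩
  calc sigma' d * c + 1 = ∑ e ∈ insert 1 (d.divisors.image (· * c)), e := by
        rw [sum_insert hone, sum_image hinj, sigma', sum_mul, add_comm]
    _ ≤ sigma' (d * c) := sum_le_sum_of_subset hsub

lemma Abundant.pos {n : ℕ} (h : Abundant n) : 0 < n := by
  refine Nat.pos_of_ne_zero ?_
  rintro rfl
  simp [Abundant, sigma'] at h

lemma Abundant.two_mul_mul_add_lt_sigma' {d c : ℕ} (h : Abundant d) (hc : 2 ≤ c) :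
    2 * (d * c) + c < sigma' (d * c) := by
  have hσ := mul_sigma'_add_one_le_sigma'_mul h.pos hc
  have : (2 * d + 1) * c ≤ sigma' d * c := Nat.mul_le_mul_right c h
  nlinarith

lemma Abundant.mul {d c : ℕ} (h : Abundant d) (hc : 0 < c) : Abundant (d * c) := by
  obtain rfl | hc2 : c = 1 ∨ 2 ≤ c := by omega
  · rwa [mul_one]
  · have := h.two_mul_mul_add_lt_sigma' hc2
    exact (Nat.le_add_right _ _).trans_lt this

lemma not_semiperfect_of_sigma'_eq {n k : ℕ} (hσ : sigma' n = 2 * n + k)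
    (hsmall : ∑ d ∈ (range (k + 1)).filter (· ∣ n), d < k) : ¬ Semiperfect n := by
  rintro ⟨S, hS, hsum⟩
  have hT : ∑ d ∈ n.properDivisors \ S, d = k := by
    have hsplit := sum_sdiff hS (f := fun d => d)
    have hproper := Nat.sum_divisors_eq_sum_properDivisors_add_self (n := n)
    rw [← sigma', hσ] at hproper
    omega
  have hTsub : n.properDivisors \ S ⊆ (range (k + 1)).filter (· ∣ n) := by
    intro d hd
    have hdk : d ≤ k := hT ▸ single_le_sum (f := fun d => d) (fun _ _ => Nat.zero_le _) hd
    exact mem_filter.2 ⟨mem_range.2 (by omega), (Nat.mem_properDivisors.1 (mem_sdiff.1 hd).1).1⟩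
  have := sum_le_sum_of_subset (f := fun d => d) hTsub
  omega

lemma sigma'_575646749 : sigma' 575646749 = 594216000 := by
  rw [show (575646749 : ℕ) = 83 * (89 * (149 * 523)) by norm_num,
    sigma'_mul_of_coprime (by norm_num), sigma'_mul_of_coprime (by norm_num),
    sigma'_mul_of_coprime (by norm_num), sigma'_prime_s18 (by norm_num), sigma'_prime_s18 (by norm_num),
    sigma'_prime_s18 (by norm_num), sigma'_prime_s18 (by norm_num)]

lemma sigma'_two_pow_mul_575646749 (k : ℕ) :
    sigma' (2 ^ k * 575646749) = (2 ^ (k + 1) - 1) * 594216000 := by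
  rw [sigma'_mul_of_coprime (Nat.Coprime.pow_left k (by norm_num)), sigma'_two_pow,
    sigma'_575646749]

lemma sigma'_9210347984 : sigma' 9210347984 = 2 * 9210347984 + 32 :=
  sigma'_two_pow_mul_575646749 4

lemma deficient_4605173992 : Deficient 4605173992 := by
  rw [Deficient, show (4605173992 : ℕ) = 2 ^ 3 * 575646749 by norm_num,
    sigma'_two_pow_mul_575646749]
  norm_num

lemma filter_range_dvd_9210347984 :
    (range 33).filter (· ∣ 9210347984) = {1, 2, 4, 8, 16} := by
  decide

lemma primeFactors_9210347984 : (9210347984 : ℕ).primeFactors = {2, 83, 89, 149, 523} := by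
  rw [show (9210347984 : ℕ) = 2 ^ 4 * 83 * 89 * 149 * 523 by norm_num,
    Nat.primeFactors_mul (by norm_num) (by norm_num),
    Nat.primeFactors_mul (by norm_num) (by norm_num),
    Nat.primeFactors_mul (by norm_num) (by norm_num),
    Nat.primeFactors_mul (by norm_num) (by norm_num),
    Nat.primeFactors_prime_pow (by norm_num) Nat.prime_two,
    Nat.Prime.primeFactors (by norm_num), Nat.Prime.primeFactors (by norm_num),
    Nat.Prime.primeFactors (by norm_num), Nat.Prime.primeFactors (by norm_num)]
  rfl

/-- `9210347984 = 2⁴·83·89·149·523` is a primitive weird number with five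
distinct prime factors: it is weird, none of its proper divisors is weird, and it
has exactly five distinct prime factors. -/
theorem primitive_weird_9210347984 :
    (9210347984 : ℕ) = 2 ^ 4 * 83 * 89 * 149 * 523 ∧
    Weird 9210347984 ∧
    (∀ d ∈ (9210347984 : ℕ).properDivisors, ¬ Weird d) ∧
    (9210347984 : ℕ).primeFactors.card = 5 := by
  refine ⟨by norm_num, ⟨?_, ?_⟩, ?_, ?_⟩
  · rw [Abundant, sigma'_9210347984]
    omega
  · exact not_semiperfect_of_sigma'_eq sigma'_9210347984
      (by rw [filter_range_dvd_9210347984]; decide)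
  · rintro d hd ⟨hab, -⟩
    obtain ⟨⟨c, hc⟩, hlt⟩ := Nat.mem_properDivisors.1 hd
    have hc2 : 2 ≤ c := by nlinarith
    have hc33 : c < 33 := by
      have := hab.two_mul_mul_add_lt_sigma' hc2
      rw [← hc, sigma'_9210347984] at this
      omega
    have hc_even : 2 ∣ c := by
      have : c ∈ (range 33).filter (· ∣ 9210347984) :=
        mem_filter.2 ⟨mem_range.2 hc33, Dvd.intro_left d hc.symm⟩
      simp only [filter_range_dvd_9210347984, mem_insert, mem_singleton] at this
      omega
    obtain ⟨c', rfl⟩ := hc_even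
    have hd_half : d * c' = 4605173992 := by linarith [mul_left_comm d 2 c']
    exact lt_asymm deficient_4605173992 (hd_half ▸ hab.mul (by omega))
  · rw [primeFactors_9210347984]
    rfl
end
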